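/- arXiv:1503.08280 — 3 statements merged into one kernel-verified Lean document; each statement's English description precedes it below -/
import Mathlib

section
/- Discrete isoperimetric (critical Sobolev) inequality on boxes (Theorem 2.7): Let d ≥ 2 and p* = d/(d−1). There exists a constant C < ∞, depending only on d, such that for every positive integer r and every function f : B_r → ℝ, one has ‖f − f̄_r‖_{L^{p*}(B_r)} ≤ C ‖∇f‖_{L^1(𝔹_r)}, where f̄_r = |B_r|^{−1} ∑_{x∈B_r} f(x). -/
open scoped ENNReal NNReal
open Set MeasureTheory

noncomputable section

namespace AnchoredNash

/-- Vertices of `ℤ^d`. -/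
abbrev Zd (d : ℕ) : Type := Fin d → ℤ

/-- Nearest-neighbour edges of `ℤ^d`, encoded as a base point together with a
direction: the pair `(x, i)` stands for the edge `{x, x + eᵢ}`. -/
abbrev Edge (d : ℕ) : Type := (Fin d → ℤ) × Fin d

/-- The second endpoint `x + eᵢ` of the edge `(x, i)`. -/
def eplus {d : ℕ} (e : Edge d) : Zd d := e.1 + Pi.single e.2 1

/-- Euclidean norm on `ℤ^d`. -/
def eucNorm {d : ℕ} (x : Zd d) : ℝ := Real.sqrt (∑ i, ((x i : ℝ)) ^ 2)

/-- `|x|_* = max (|x|, 1)`. -/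
def xstar {d : ℕ} (x : Zd d) : ℝ := max (eucNorm x) 1

/-- The box `B_r = {-r, …, r}^d`. -/
def box (d r : ℕ) : Finset (Zd d) := Fintype.piFinset fun _ => Finset.Icc (-(r : ℤ)) (r : ℤ)

/-- The set `𝔹_r` of edges with both endpoints in `B_r`. -/
def edgeBox (d r : ℕ) : Finset (Edge d) :=
  (box d r ×ˢ (Finset.univ : Finset (Fin d))).filter fun e => eplus e ∈ box d r

/-- Squared gradient `|∇f|(e)²` of `f` along the edge `e`, valued in `ℝ≥0∞`. -/
def grad2 {d : ℕ} (f : Zd d → ℝ) (e : Edge d) : ℝ≥0∞ :=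
  (‖f (eplus e) - f e.1‖₊ : ℝ≥0∞) ^ 2

/-- `‖f‖₂`, valued in `ℝ≥0∞`. -/
def l2 {d : ℕ} (f : Zd d → ℝ) : ℝ≥0∞ := (∑' x, (‖f x‖₊ : ℝ≥0∞) ^ 2) ^ (1/2 : ℝ)

/-- `‖f‖₁`, valued in `ℝ≥0∞`. -/
def l1 {d : ℕ} (f : Zd d → ℝ) : ℝ≥0∞ := ∑' x, (‖f x‖₊ : ℝ≥0∞)

/-- `‖w ∇f‖₂`, valued in `ℝ≥0∞`. -/
def wGradNorm {d : ℕ} (w : Edge d → ℝ≥0) (f : Zd d → ℝ) : ℝ≥0∞ :=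
  (∑' e, (w e : ℝ≥0∞) ^ 2 * grad2 f e) ^ (1/2 : ℝ)

/-- `‖ |x|_*^{p/2} f ‖₂`, valued in `ℝ≥0∞`. -/
def wl2 {d : ℕ} (p : ℝ) (f : Zd d → ℝ) : ℝ≥0∞ :=
  (∑' x, ENNReal.ofReal (xstar x ^ p) * (‖f x‖₊ : ℝ≥0∞) ^ 2) ^ (1/2 : ℝ)

/-- The anchored maximal function
`M_q(w) = (sup_{r ≥ 1} |𝔹_r|⁻¹ ∑_{e ∈ 𝔹_r} w(e)^{-q})^{1/q}`, with the convention
`0 ^ (-q) = ∞` (automatic in `ℝ≥0∞`). -/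
def Mq (d : ℕ) (q : ℝ) (w : Edge d → ℝ≥0) : ℝ≥0∞ :=
  (⨆ (r : ℕ) (_ : 1 ≤ r),
    ((edgeBox d r).card : ℝ≥0∞)⁻¹ * ∑ e ∈ edgeBox d r, (w e : ℝ≥0∞) ^ (-q)) ^ (1/q)

/-- The critical exponent `θ_c`, defined by
`1/θ_c = 1 + ((dp+2p)/(dp+2d)) (q/d - 1)`. -/
def θcrit (d : ℕ) (p q : ℝ) : ℝ :=
  1 / (1 + (((d : ℝ) * p + 2 * p) / ((d : ℝ) * p + 2 * (d : ℝ))) * (q / (d : ℝ) - 1))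

/-- `L^s` norm of `f` on the box `B_r`. -/
def boxLp (d r : ℕ) (s : ℝ) (f : Zd d → ℝ) : ℝ := (∑ x ∈ box d r, |f x| ^ s) ^ (1/s)

/-- `L^∞` norm of `f` on the box `B_r`. -/
def boxLinf (d r : ℕ) (f : Zd d → ℝ) : ℝ := sSup ((fun x => |f x|) '' (box d r : Set (Zd d)))

/-- `L^s` norm of `∇f` on the edge set `𝔹_r`. -/
def gradLp (d r : ℕ) (s : ℝ) (f : Zd d → ℝ) : ℝ :=
  (∑ e ∈ edgeBox d r, |f (eplus e) - f e.1| ^ s) ^ (1/s)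

/-- Average of `f` over the box `B_r`. -/
def avg (d r : ℕ) (f : Zd d → ℝ) : ℝ := (∑ x ∈ box d r, f x) / ((box d r).card : ℝ)

/-- Generator of the random walk among the conductances `a`:
`(gen a f) y = ∑_{z ∼ y} a({y,z}) (f z - f y)`. -/
def gen {d : ℕ} (a : Edge d → ℝ) (f : Zd d → ℝ) (y : Zd d) : ℝ :=
  ∑ i : Fin d,
    (a (y, i) * (f (y + Pi.single i 1) - f y) +
      a (y - Pi.single i 1, i) * (f (y - Pi.single i 1) - f y))

/-- `hk` is the heat kernel of the static environment `a`: the (unique) bounded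
solution of `∂_t p_t(x,y) = ∑_{z ∼ y} a({y,z})(p_t(x,z) - p_t(x,y))`, `p_0(x,y) = 1_{x=y}`,
together with its standard properties (nonnegativity, total mass one, symmetry). -/
structure IsHeatKernel (d : ℕ) (a : Edge d → ℝ) (hk : ℝ → Zd d → Zd d → ℝ) : Prop where
  bounded : ∀ t, ∃ M, ∀ x y, |hk t x y| ≤ M
  init : ∀ x y, hk 0 x y = if x = y then (1 : ℝ) else 0
  ode : ∀ x y, ∀ t ∈ Ici (0 : ℝ),
    HasDerivWithinAt (fun s => hk s x y) (gen a (fun z => hk t x z) y) (Ici (0 : ℝ)) t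
  nonneg : ∀ t x y, 0 ≤ t → 0 ≤ hk t x y
  mass : ∀ t x, 0 ≤ t → HasSum (fun y => hk t x y) 1
  symm : ∀ t x y, 0 ≤ t → hk t x y = hk t y x

/-- The Dirichlet energy `∑_e a(e) |∇u|(e)²`, valued in `ℝ≥0∞`. -/
def dirichlet {d : ℕ} (a : Edge d → ℝ) (u : Zd d → ℝ) : ℝ≥0∞ :=
  ∑' e, ENNReal.ofReal (a e) * grad2 u e

/-- The static environment `a` (with heat kernel `hk`) is `w`-moderate:
`‖w ∇u_t‖₂² ≤ D_t` for all `t ≥ 0`, where `u_t = p_t(0, ·)`. -/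
def StaticModerate (d : ℕ) (a : Edge d → ℝ) (w : Edge d → ℝ≥0)
    (hk : ℝ → Zd d → Zd d → ℝ) : Prop :=
  ∀ t, 0 ≤ t →
    ∑' e, (w e : ℝ≥0∞) ^ 2 * grad2 (fun z => hk t 0 z) e ≤ dirichlet a fun z => hk t 0 z

/-- Piecewise continuity: continuity away from a countable set. -/
def PiecewiseCts (g : ℝ → ℝ) : Prop :=
  ∃ D : Set ℝ, D.Countable ∧ ∀ t ∉ D, ContinuousAt g t

/-- A dynamic environment: for each edge, a piecewise continuous `[0,1]`-valued
function of time. -/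
def IsDynEnv (d : ℕ) (a : ℝ → Edge d → ℝ) : Prop :=
  (∀ t e, a t e ∈ Icc (0 : ℝ) 1) ∧ ∀ e, PiecewiseCts fun t => a t e

/-- `hk` is the heat kernel of the dynamic environment `a`: the (unique) bounded
solution of `∂_t p_{s,t}(x,y) = ∑_{z ∼ y} a_t({y,z})(p_{s,t}(x,z) - p_{s,t}(x,y))` with
`p_{s,s}(x,y) = 1_{x=y}` (stated in integral form), together with its standard
properties (nonnegativity, total mass one). -/
structure IsDynKernel (d : ℕ) (a : ℝ → Edge d → ℝ) (hk : ℝ → ℝ → Zd d → Zd d → ℝ) :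
    Prop where
  bounded : ∀ s t, ∃ M, ∀ x y, |hk s t x y| ≤ M
  eqn : ∀ s x y t, s ≤ t →
    hk s t x y = (if x = y then (1:ℝ) else 0) + ∫ τ in s..t, gen (a τ) (fun z => hk s τ x z) y
  nonneg : ∀ s t x y, s ≤ t → 0 ≤ hk s t x y
  mass : ∀ s t x, s ≤ t → HasSum (fun y => hk s t x y) 1

/-- The Dirichlet energy `D_t = ∑_e a_t(e) |∇u_t|(e)²` of `u_t = p_{0,t}(0,·)`. -/
def dynD (d : ℕ) (a : ℝ → Edge d → ℝ) (hk : ℝ → ℝ → Zd d → Zd d → ℝ) (t : ℝ) : ℝ≥0∞ :=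
  ∑' e : Edge d, ENNReal.ofReal (a t e) * grad2 (fun z => hk 0 t 0 z) e

/-- The dynamic environment `a` (with heat kernel `hk`) is `(w,K)`-moderate:
`‖w_t ∇u_t‖₂² ≤ D̄_t = ∫_t^∞ K_{s-t} D_s ds` for all `t ≥ 0`. -/
def DynModerate (d : ℕ) (a : ℝ → Edge d → ℝ) (K : ℝ → ℝ) (w : ℝ → Edge d → ℝ≥0)
    (hk : ℝ → ℝ → Zd d → Zd d → ℝ) : Prop :=
  ∀ t, 0 ≤ t →
    ∑' e, (w t e : ℝ≥0∞) ^ 2 * grad2 (fun z => hk 0 t 0 z) e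
      ≤ ∫⁻ s in Ici t, ENNReal.ofReal (K (s - t)) * dynD d a hk s

/-- `C(K) = max (1, ‖K‖₁^{α/β} / ‖K‖_{L¹([0,1])}^{(1-α)/β})`. -/
def CK (α β : ℝ) (K : ℝ → ℝ) : ℝ≥0∞ :=
  max 1 ((∫⁻ s in Ici (0:ℝ), ENNReal.ofReal (K s)) ^ (α / β)
    / (∫⁻ s in Icc (0:ℝ) 1, ENNReal.ofReal (K s)) ^ ((1 - α) / β))

/-- The space-time maximal quantity `𝓜_q(w)`, defined through
`𝓜_q(w)⁻² = inf_{t ≥ 1} t⁻¹ ∫_0^t M_q(w_s)⁻² ds`. -/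
def MMq (d : ℕ) (q : ℝ) (w : ℝ → Edge d → ℝ≥0) : ℝ≥0∞ :=
  (⨅ (t : ℝ) (_ : 1 ≤ t),
    ENNReal.ofReal t⁻¹ * ∫⁻ s in Ioc (0:ℝ) t, Mq d q (w s) ^ (-2 : ℝ)) ^ (-(1/2) : ℝ)

/-- The standing hypotheses on `K : ℝ₊ → ℝ₊`: measurable, nonnegative, integrable,
with positive mass on `[0,1]`. -/
def GoodK (K : ℝ → ℝ) : Prop :=
  Measurable K ∧ (∀ s, 0 ≤ K s) ∧ IntegrableOn K (Ici (0:ℝ)) ∧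
    (∫⁻ s in Icc (0:ℝ) 1, ENNReal.ofReal (K s)) ≠ 0

/-- The standing hypotheses on the weights: a measurable family with values in `[0,1]`. -/
def GoodW (d : ℕ) (w : ℝ → Edge d → ℝ≥0) : Prop :=
  (∀ t e, w t e ≤ 1) ∧ ∀ e, Measurable fun t => w t e

end AnchoredNash

/-!
Write `g = f - f̄_r` and `N = 2r + 1`. On the line of `B_r` through `x` in direction `k`,
`|g x|` is at most the mean of `|g|` on that line plus the variation of `f` along it, so
`φ = |g| / N + ∑ₖ |∇ₖ f|` satisfies `|g x| ≤ ∑_{line through x} φ` in every direction.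
The Loomis–Whitney inequality then gives `‖g‖_{p*} ≤ ∑ φ`, and `∑ φ ≤ 2 ‖∇f‖₁` by the
`L¹` Poincaré inequality `‖g‖₁ ≤ N ‖∇f‖₁`, which follows by joining any two points of the box
by a path that corrects one coordinate at a time. Hence `C = 2`.
-/

theorem MeasureTheory.Measure.pi_count {ι α : Type*} [Fintype ι] [Countable α]
    [MeasurableSpace α] [MeasurableSingletonClass α] :
    Measure.pi (fun _ : ι => (Measure.count : Measure α)) = Measure.count :=
  Measure.ext_of_singleton fun x => by
    rw [Measure.count_singleton, ← Set.univ_pi_singleton x, Measure.pi_pi]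
    simp

/-- The Loomis–Whitney (Gagliardo–Nirenberg) inequality on a countable grid `α^ι`. -/
theorem tsum_prod_tsum_update_rpow_le {ι α : Type*} [Fintype ι] [DecidableEq ι] [Countable α]
    [MeasurableSpace α] [MeasurableSingletonClass α] {p : ℝ}
    (hp : Real.HolderConjugate (Fintype.card ι) p) (φ : (ι → α) → ℝ≥0∞) :
    ∑' x, ∏ i, (∑' t, φ (Function.update x i t)) ^ ((1 : ℝ) / (Fintype.card ι - 1 : ℝ))
      ≤ (∑' x, φ x) ^ p := by
  have := lintegral_prod_lintegral_pow_le (fun _ : ι => (Measure.count : Measure α)) hp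
    (measurable_of_countable φ)
  simpa only [Measure.pi_count, lintegral_count] using this

namespace AnchoredNash

lemma abs_sub_le_sum_Ico_of_le (h : ℤ → ℝ) {a b : ℤ} (hab : a ≤ b) :
    |h b - h a| ≤ ∑ s ∈ Finset.Ico a b, |h (s + 1) - h s| := by
  induction b, hab using Int.leInduction with
  | base => simp
  | succ n hn ih =>
    rw [← Finset.insert_Ico_right_eq_Ico_add_one hn, Finset.sum_insert (by simp)]
    have := abs_sub_le (h (n + 1)) (h n) (h a)
    linarith

lemma abs_sub_le_sum_Ico (h : ℤ → ℝ) {a b u v : ℤ} (hu : u ∈ Finset.Icc a b)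
    (hv : v ∈ Finset.Icc a b) :
    |h v - h u| ≤ ∑ s ∈ Finset.Ico a b, |h (s + 1) - h s| := by
  rw [Finset.mem_Icc] at hu hv
  rcases le_total u v with huv | hvu
  · exact (abs_sub_le_sum_Ico_of_le h huv).trans (Finset.sum_le_sum_of_subset_of_nonneg
      (Finset.Ico_subset_Ico hu.1 hv.2) fun _ _ _ => abs_nonneg _)
  · rw [abs_sub_comm]
    exact (abs_sub_le_sum_Ico_of_le h hvu).trans (Finset.sum_le_sum_of_subset_of_nonneg
      (Finset.Ico_subset_Ico hv.1 hu.2) fun _ _ _ => abs_nonneg _)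

section Box

variable {d r : ℕ}

lemma card_Icc_neg (r : ℕ) : (Finset.Icc (-(r : ℤ)) r).card = 2 * r + 1 := by
  rw [Int.card_Icc]
  omega

lemma mem_box_iff {x : Zd d} : x ∈ box d r ↔ ∀ i, x i ∈ Finset.Icc (-(r : ℤ)) r :=
  Fintype.mem_piFinset

lemma box_nonempty : (box d r).Nonempty :=
  ⟨0, mem_box_iff.2 fun _ => by simp⟩

lemma update_mem_box {x : Zd d} (hx : x ∈ box d r) (k : Fin d) {t : ℤ}
    (ht : t ∈ Finset.Icc (-(r : ℤ)) r) : Function.update x k t ∈ box d r := by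
  rw [mem_box_iff] at hx ⊢
  intro i
  rcases eq_or_ne i k with rfl | h
  · simpa using ht
  · simpa [Function.update_of_ne h] using hx i

lemma eplus_update (x : Zd d) (k : Fin d) (t : ℤ) :
    eplus (Function.update x k t, k) = Function.update x k (t + 1) := by
  funext j
  rcases eq_or_ne j k with rfl | h
  · simp [eplus]
  · simp [eplus, h]

/-- `(x, t) ↦ (x with k-th coordinate t, x k)` is an involution of `B_r × [-r, r]`. -/
lemma sum_box_sum_update {M : Type*} [AddCommMonoid M] (k : Fin d) (ψ : Zd d → M) :
    ∑ x ∈ box d r, ∑ t ∈ Finset.Icc (-(r : ℤ)) r, ψ (Function.update x k t)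
      = (2 * r + 1) • ∑ x ∈ box d r, ψ x := by
  have hswap : ∑ p ∈ box d r ×ˢ Finset.Icc (-(r : ℤ)) r, ψ (Function.update p.1 k p.2)
      = ∑ p ∈ box d r ×ˢ Finset.Icc (-(r : ℤ)) r, ψ p.1 := by
    refine Finset.sum_nbij' (fun p => (Function.update p.1 k p.2, p.1 k))
      (fun p => (Function.update p.1 k p.2, p.1 k)) ?_ ?_ ?_ ?_ ?_ <;>
      simp only [Finset.mem_product, Function.update_self,
        Function.update_idem, Function.update_eq_self, Prod.mk.eta, implies_true]
    all_goals
      rintro ⟨x, t⟩ ⟨hx, ht⟩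
      exact ⟨update_mem_box hx k ht, (mem_box_iff.1 hx) k⟩
  rw [← Finset.sum_product', hswap, Finset.sum_product]
  simp only [Finset.sum_const, card_Icc_neg, Finset.smul_sum]

def splice (x y : Zd d) (k : ℕ) : Zd d := fun j => if (j : ℕ) < k then y j else x j

lemma splice_mem_box {x y : Zd d} (hx : x ∈ box d r) (hy : y ∈ box d r) (k : ℕ) :
    splice x y k ∈ box d r := by
  rw [mem_box_iff] at hx hy ⊢
  intro j
  unfold splice
  split_ifs
  exacts [hy j, hx j]

lemma splice_zero (x y : Zd d) : splice x y 0 = x := by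
  funext j
  simp [splice]

lemma splice_dim (x y : Zd d) : splice x y d = y := by
  funext j
  simp [splice]

lemma splice_succ (x y : Zd d) (k : Fin d) :
    splice x y (k + 1) = Function.update (splice x y k) k (y k) := by
  funext j
  rcases eq_or_ne j k with rfl | h
  · simp [splice]
  · have : (j : ℕ) ≠ k := Fin.val_ne_of_ne h
    simp only [splice, Function.update_of_ne h]
    split_ifs <;> first | rfl | omega

lemma splice_splice (x y : Zd d) (k : ℕ) : splice (splice x y k) (splice y x k) k = x := by
  funext j
  simp only [splice]
  split_ifs <;> rfl

/-- `(x, y) ↦ (splice x y k, splice y x k)` is an involution of `B_r × B_r`. -/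
lemma sum_box_box_splice {M : Type*} [AddCommMonoid M] (k : ℕ) (ψ : Zd d → M) :
    ∑ p ∈ box d r ×ˢ box d r, ψ (splice p.1 p.2 k) = (box d r).card • ∑ x ∈ box d r, ψ x := by
  have hswap : ∑ p ∈ box d r ×ˢ box d r, ψ (splice p.1 p.2 k)
      = ∑ p ∈ box d r ×ˢ box d r, ψ p.1 := by
    refine Finset.sum_nbij' (fun p => (splice p.1 p.2 k, splice p.2 p.1 k))
      (fun p => (splice p.1 p.2 k, splice p.2 p.1 k)) ?_ ?_ ?_ ?_ ?_ <;>
      simp only [Finset.mem_product, splice_splice, implies_true]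
    all_goals
      rintro ⟨x, y⟩ ⟨hx, hy⟩
      exact ⟨splice_mem_box hx hy k, splice_mem_box hy hx k⟩
  rw [hswap, Finset.sum_product, Finset.sum_comm]
  simp only [Finset.sum_const, Finset.smul_sum]

end Box

section Gradient

variable {d r : ℕ}

def dirGrad (r : ℕ) (f : Zd d → ℝ) (k : Fin d) (x : Zd d) : ℝ :=
  if eplus (x, k) ∈ box d r then |f (eplus (x, k)) - f x| else 0

lemma dirGrad_nonneg (f : Zd d → ℝ) (k : Fin d) (x : Zd d) : 0 ≤ dirGrad r f k x := by
  unfold dirGrad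
  split_ifs
  exacts [abs_nonneg _, le_rfl]

lemma sum_sum_dirGrad (f : Zd d → ℝ) :
    ∑ k, ∑ x ∈ box d r, dirGrad r f k x = ∑ e ∈ edgeBox d r, |f (eplus e) - f e.1| := by
  rw [edgeBox, Finset.sum_filter, Finset.sum_product, Finset.sum_comm]
  rfl

def lineVar (r : ℕ) (f : Zd d → ℝ) (k : Fin d) (x : Zd d) : ℝ :=
  ∑ t ∈ Finset.Icc (-(r : ℤ)) r, dirGrad r f k (Function.update x k t)

lemma sum_lineVar (f : Zd d → ℝ) (k : Fin d) :
    ∑ x ∈ box d r, lineVar r f k x = (2 * r + 1) * ∑ x ∈ box d r, dirGrad r f k x := by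
  rw [← Nat.cast_ofNat, ← Nat.cast_mul, ← Nat.cast_add_one, ← nsmul_eq_mul]
  exact sum_box_sum_update k _

lemma abs_sub_le_lineVar (f : Zd d → ℝ) {x : Zd d} (hx : x ∈ box d r) (k : Fin d) {t : ℤ}
    (ht : t ∈ Finset.Icc (-(r : ℤ)) r) : |f (Function.update x k t) - f x| ≤ lineVar r f k x := by
  have hdir : ∀ s ∈ Finset.Ico (-(r : ℤ)) r,
      |f (Function.update x k (s + 1)) - f (Function.update x k s)|
        = dirGrad r f k (Function.update x k s) := by
    intro s hs
    rw [Finset.mem_Ico] at hs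
    have hs1 : s + 1 ∈ Finset.Icc (-(r : ℤ)) r := Finset.mem_Icc.2 ⟨by omega, by omega⟩
    rw [dirGrad, eplus_update, if_pos (update_mem_box hx k hs1)]
  calc |f (Function.update x k t) - f x|
      = |f (Function.update x k t) - f (Function.update x k (x k))| := by
        rw [Function.update_eq_self]
    _ ≤ ∑ s ∈ Finset.Ico (-(r : ℤ)) r,
          |f (Function.update x k (s + 1)) - f (Function.update x k s)| :=
        abs_sub_le_sum_Ico (fun s => f (Function.update x k s)) (mem_box_iff.1 hx k) ht
    _ = ∑ s ∈ Finset.Ico (-(r : ℤ)) r, dirGrad r f k (Function.update x k s) :=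
        Finset.sum_congr rfl hdir
    _ ≤ lineVar r f k x :=
        Finset.sum_le_sum_of_subset_of_nonneg Finset.Ico_subset_Icc_self
          fun _ _ _ => dirGrad_nonneg f k _

/-- Walk from `x` to `y` changing one coordinate at a time. -/
lemma abs_sub_le_sum_lineVar (f : Zd d → ℝ) {x y : Zd d} (hx : x ∈ box d r)
    (hy : y ∈ box d r) : |f y - f x| ≤ ∑ k : Fin d, lineVar r f k (splice x y k) := by
  have htel : f y - f x = ∑ k : Fin d, (f (splice x y (k + 1)) - f (splice x y k)) := by
    rw [Fin.sum_univ_eq_sum_range (fun k => f (splice x y (k + 1)) - f (splice x y k)),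
      Finset.sum_range_sub (fun k => f (splice x y k)), splice_dim, splice_zero]
  rw [htel]
  refine (Finset.abs_sum_le_sum_abs _ _).trans (Finset.sum_le_sum fun k _ => ?_)
  rw [splice_succ]
  exact abs_sub_le_lineVar f (splice_mem_box hx hy k) k (mem_box_iff.1 hy k)

lemma card_box_mul_sub_avg (f : Zd d → ℝ) (x : Zd d) :
    ((box d r).card : ℝ) * (f x - avg d r f) = ∑ y ∈ box d r, (f x - f y) := by
  have hB : ((box d r).card : ℝ) ≠ 0 := by exact_mod_cast box_nonempty.card_pos.ne'
  rw [avg, Finset.sum_sub_distrib, Finset.sum_const, nsmul_eq_mul, mul_sub,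
    mul_div_cancel₀ _ hB]

theorem sum_abs_sub_avg_le (f : Zd d → ℝ) :
    ∑ x ∈ box d r, |f x - avg d r f|
      ≤ (2 * r + 1) * ∑ e ∈ edgeBox d r, |f (eplus e) - f e.1| := by
  have hB : (0 : ℝ) < (box d r).card := by exact_mod_cast box_nonempty.card_pos
  refine le_of_mul_le_mul_left ?_ hB
  calc ((box d r).card : ℝ) * ∑ x ∈ box d r, |f x - avg d r f|
      = ∑ x ∈ box d r, |∑ y ∈ box d r, (f x - f y)| := by
        rw [Finset.mul_sum]
        refine Finset.sum_congr rfl fun x _ => ?_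
        rw [← card_box_mul_sub_avg, abs_mul, abs_of_pos hB]
    _ ≤ ∑ p ∈ box d r ×ˢ box d r, |f p.2 - f p.1| := by
        rw [Finset.sum_product]
        refine Finset.sum_le_sum fun x _ => (Finset.abs_sum_le_sum_abs _ _).trans_eq ?_
        simp only [abs_sub_comm]
    _ ≤ ∑ p ∈ box d r ×ˢ box d r, ∑ k : Fin d, lineVar r f k (splice p.1 p.2 k) :=
        Finset.sum_le_sum fun p hp =>
          abs_sub_le_sum_lineVar f (Finset.mem_product.1 hp).1 (Finset.mem_product.1 hp).2
    _ = ((box d r).card : ℝ) * ((2 * r + 1) * ∑ e ∈ edgeBox d r, |f (eplus e) - f e.1|) := by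
        rw [Finset.sum_comm, ← sum_sum_dirGrad, Finset.mul_sum, Finset.mul_sum]
        refine Finset.sum_congr rfl fun k _ => ?_
        rw [sum_box_box_splice k (lineVar r f k), nsmul_eq_mul, sum_lineVar]

end Gradient

section Sobolev

variable {d r : ℕ}

theorem sum_abs_rpow_le_of_le_sum_update (hd : 2 ≤ d) {u φ : Zd d → ℝ} (hφ : ∀ z, 0 ≤ φ z)
    (hu : ∀ x ∈ box d r, ∀ k,
      |u x| ≤ ∑ t ∈ Finset.Icc (-(r : ℤ)) r, φ (Function.update x k t)) :
    ∑ x ∈ box d r, |u x| ^ ((d : ℝ) / (d - 1))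
      ≤ (∑ x ∈ box d r, φ x) ^ ((d : ℝ) / (d - 1)) := by
  set p : ℝ := d / (d - 1) with hp_def
  have hd1 : (1 : ℝ) < d := by exact_mod_cast hd
  have hp : Real.HolderConjugate (Fintype.card (Fin d)) p := by
    rw [Fintype.card_fin]
    exact Real.HolderConjugate.conjExponent hd1
  have hp0 : 0 ≤ p := hp.symm.nonneg
  set F : Zd d → ℝ≥0∞ := fun z => if z ∈ box d r then ENNReal.ofReal (φ z) else 0
  have hF_tsum : ∑' z, F z = ENNReal.ofReal (∑ z ∈ box d r, φ z) := by
    rw [tsum_eq_sum fun z hz => if_neg hz, ENNReal.ofReal_sum_of_nonneg fun z _ => hφ z]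
    exact Finset.sum_congr rfl fun z hz => if_pos hz
  have hF_line : ∀ x ∈ box d r, ∀ k,
      ENNReal.ofReal |u x| ≤ ∑' t, F (Function.update x k t) := by
    intro x hx k
    calc ENNReal.ofReal |u x|
        ≤ ENNReal.ofReal (∑ t ∈ Finset.Icc (-(r : ℤ)) r, φ (Function.update x k t)) :=
          ENNReal.ofReal_le_ofReal (hu x hx k)
      _ = ∑ t ∈ Finset.Icc (-(r : ℤ)) r, F (Function.update x k t) := by
          rw [ENNReal.ofReal_sum_of_nonneg fun t _ => hφ _]
          exact Finset.sum_congr rfl fun t ht => (if_pos (update_mem_box hx k ht)).symm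
      _ ≤ ∑' t, F (Function.update x k t) := ENNReal.sum_le_tsum _
  have hpoint : ∀ x ∈ box d r, ENNReal.ofReal (|u x| ^ p)
      ≤ ∏ k : Fin d, (∑' t, F (Function.update x k t)) ^ ((1 : ℝ) / (d - 1)) := by
    intro x hx
    have hsplit : ENNReal.ofReal (|u x| ^ p)
        = ∏ _k : Fin d, ENNReal.ofReal |u x| ^ ((1 : ℝ) / (d - 1)) := by
      rw [← ENNReal.ofReal_rpow_of_nonneg (abs_nonneg _) hp0, Finset.prod_const,
        Finset.card_univ, Fintype.card_fin, ← ENNReal.rpow_natCast, ← ENNReal.rpow_mul, hp_def]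
      congr 1
      field_simp
    rw [hsplit]
    exact Finset.prod_le_prod' fun k _ => ENNReal.rpow_le_rpow (hF_line x hx k) (by positivity)
  have hφ_sum : 0 ≤ ∑ z ∈ box d r, φ z := Finset.sum_nonneg fun z _ => hφ z
  rw [← ENNReal.ofReal_le_ofReal_iff (Real.rpow_nonneg hφ_sum p),
    ENNReal.ofReal_sum_of_nonneg fun x _ => by positivity,
    ← ENNReal.ofReal_rpow_of_nonneg hφ_sum hp0, ← hF_tsum]
  calc ∑ x ∈ box d r, ENNReal.ofReal (|u x| ^ p)
      ≤ ∑ x ∈ box d r, ∏ k : Fin d, (∑' t, F (Function.update x k t)) ^ ((1 : ℝ) / (d - 1)) :=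
        Finset.sum_le_sum hpoint
    _ ≤ ∑' x, ∏ k : Fin d, (∑' t, F (Function.update x k t)) ^ ((1 : ℝ) / (d - 1)) :=
        ENNReal.sum_le_tsum _
    _ ≤ (∑' z, F z) ^ p := by
        simpa only [Fintype.card_fin] using tsum_prod_tsum_update_rpow_le hp F

end Sobolev

section Isoperimetric

variable {d r : ℕ}

lemma sum_Icc_const (r : ℕ) (a : ℝ) :
    ∑ _t ∈ Finset.Icc (-(r : ℤ)) r, a = (2 * r + 1) * a := by
  rw [Finset.sum_const, card_Icc_neg, nsmul_eq_mul]
  push_cast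
  ring

lemma abs_sub_le_avg_line_add_lineVar (f : Zd d → ℝ) (c : ℝ) {x : Zd d} (hx : x ∈ box d r)
    (k : Fin d) :
    |f x - c| ≤ (∑ t ∈ Finset.Icc (-(r : ℤ)) r, |f (Function.update x k t) - c|) / (2 * r + 1)
      + lineVar r f k x := by
  have hN : (0 : ℝ) < 2 * r + 1 := by positivity
  rw [← sub_le_iff_le_add, le_div_iff₀ hN, ← sub_nonneg]
  have key : ∀ t ∈ Finset.Icc (-(r : ℤ)) r,
      |f x - c| - lineVar r f k x ≤ |f (Function.update x k t) - c| := by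
    intro t ht
    have h1 := abs_sub_le_lineVar f hx k ht
    have h2 := abs_sub_le (f x) (f (Function.update x k t)) c
    rw [abs_sub_comm] at h1
    linarith
  have := Finset.sum_le_sum key
  rw [sum_Icc_const] at this
  linarith

theorem boxLp_sub_avg_le (hd : 2 ≤ d) (f : Zd d → ℝ) :
    boxLp d r ((d : ℝ) / ((d : ℝ) - 1)) (fun x => f x - avg d r f) ≤ 2 * gradLp d r 1 f := by
  set p : ℝ := (d : ℝ) / ((d : ℝ) - 1)
  set R := ∑ e ∈ edgeBox d r, |f (eplus e) - f e.1|
  have hN : (0 : ℝ) < 2 * r + 1 := by positivity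
  set φ : Zd d → ℝ := fun z => |f z - avg d r f| / (2 * r + 1) + ∑ k, dirGrad r f k z
  have hφ : ∀ z, 0 ≤ φ z := fun z =>
    add_nonneg (by positivity) (Finset.sum_nonneg fun k _ => dirGrad_nonneg f k z)
  have hline : ∀ x ∈ box d r, ∀ k,
      |f x - avg d r f| ≤ ∑ t ∈ Finset.Icc (-(r : ℤ)) r, φ (Function.update x k t) := by
    intro x hx k
    refine (abs_sub_le_avg_line_add_lineVar f _ hx k).trans ?_
    rw [Finset.sum_add_distrib, Finset.sum_div]
    exact add_le_add_right (Finset.sum_le_sum fun t _ =>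
      Finset.single_le_sum (fun k' _ => dirGrad_nonneg f k' _) (Finset.mem_univ k)) _
  have hmass : ∑ z ∈ box d r, φ z ≤ 2 * R := by
    have hP : (∑ x ∈ box d r, |f x - avg d r f|) / (2 * r + 1) ≤ R := by
      rw [div_le_iff₀ hN, mul_comm]
      exact sum_abs_sub_avg_le f
    rw [Finset.sum_add_distrib, ← Finset.sum_div, Finset.sum_comm, sum_sum_dirGrad]
    linarith
  have hp : 0 < p := by
    have : (2 : ℝ) ≤ d := by exact_mod_cast hd
    exact div_pos (by linarith) (by linarith)
  have hgrad : gradLp d r 1 f = R := by simp [gradLp, R]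
  rw [boxLp, hgrad]
  calc (∑ x ∈ box d r, |f x - avg d r f| ^ p) ^ (1 / p)
      ≤ ((∑ z ∈ box d r, φ z) ^ p) ^ (1 / p) :=
        Real.rpow_le_rpow (Finset.sum_nonneg fun _ _ => by positivity)
          (sum_abs_rpow_le_of_le_sum_update hd hφ hline) (by positivity)
    _ = ∑ z ∈ box d r, φ z := by
        rw [← Real.rpow_mul (Finset.sum_nonneg fun z _ => hφ z), mul_one_div_cancel hp.ne',
          Real.rpow_one]
    _ ≤ 2 * R := hmass

end Isoperimetric

/-- Discrete isoperimetric (critical Sobolev) inequality on boxes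
(Theorem 2.7). -/
theorem isoperimetric_box
    (d : ℕ) (hd : 2 ≤ d) :
    ∃ C : ℝ, 0 ≤ C ∧ ∀ r : ℕ, 1 ≤ r → ∀ f : Zd d → ℝ,
      boxLp d r ((d : ℝ) / ((d : ℝ) - 1)) (fun x => f x - avg d r f)
        ≤ C * gradLp d r 1 f :=
  ⟨2, zero_le_two, fun _ _ f => boxLp_sub_avg_le hd f⟩

end AnchoredNash
end
end

section
/- Potential-kernel bound on the oscillation of a function around its box average (inequality (2.8) in the proof of Theorem 2.5): Let d ≥ 2. There exists a constant C < ∞, depending only on d, such that for every positive integer r, every function f : B_r → ℝ, and every x ∈ B_r, one has |f(x) − f̄_r| ≤ C ∑_{e ∈ 𝔹_r} (1 + |x − e̲|)^{−(d−1)} |∇f|(e), where f̄_r = |B_r|^{−1} ∑_{y∈B_r} f(y), e̲ denotes an endpoint of the edge e, and |·| is the Euclidean norm. -/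
open scoped ENNReal NNReal
open Set MeasureTheory

noncomputable section

/-!
Let `Q_k = (x + [-(2^k - 1), 2^k - 1]^d) ∩ B_r`; these boxes grow from `Q_0 = {x}` to `Q_K = B_r`
and have all sides at least `2^k` for `k < K`, so `f x - f̄_r` telescopes into the differences of
consecutive averages over the `Q_k`. Such a difference is at most the average of `|f y - f z|`
over `y ∈ Q_k`, `z ∈ Q_{k+1}`, and `|f y - f z|` is bounded by the gradient along the coordinate
staircase from `y` to `z`. An edge in direction `j` on that staircase pins the coordinates of `y`
after `j` and those of `z` before `j`, so it lies on the staircases of at most a fraction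
`2^{-k(d-1)}` of the pairs: the difference is at most
`2^{-k(d-1)} ∑_{e ⊆ Q_{k+1}} |∇f|(e)`. An edge at distance `ρ` from `x` occurs only at scales with
`2^k ≳ ρ / √d`, and since `d ≥ 2` these weights sum geometrically to `O(ρ^{-(d-1)})`.
-/

open Finset
open scoped BigOperators

namespace AnchoredNash

lemma abs_sub_le_sum_Ico_abs_sub (F : ℤ → ℝ) (a b : ℤ) :
    |F b - F a| ≤ ∑ t ∈ Ico (min a b) (max a b), |F (t + 1) - F t| := by
  have telescope {a b : ℤ} (hab : a ≤ b) : F b - F a = ∑ t ∈ Ico a b, (F (t + 1) - F t) := by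
    induction b, hab using Int.leInduction with
    | base => simp
    | succ b hab ih =>
      rw [← Finset.insert_Ico_right_eq_Ico_add_one hab, sum_insert (by simp), ← ih]
      ring
  rcases le_total a b with h | h
  · rw [min_eq_left h, max_eq_right h, telescope h]
    exact abs_sum_le_sum_abs _ _
  · rw [min_eq_right h, max_eq_left h, abs_sub_comm, telescope h]
    exact abs_sum_le_sum_abs _ _

lemma abs_expect_sub_expect_le {α : Type*} {A B : Finset α} (hA : A.Nonempty) (hB : B.Nonempty)
    (f : α → ℝ) : |𝔼 y ∈ A, f y - 𝔼 z ∈ B, f z| ≤ 𝔼 p ∈ A ×ˢ B, |f p.1 - f p.2| := by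
  have pairs : 𝔼 y ∈ A, f y - 𝔼 z ∈ B, f z = 𝔼 p ∈ A ×ˢ B, (f p.1 - f p.2) := by
    rw [expect_sub_distrib, expect_product' A B fun y _ => f y, expect_product' A B fun _ z => f z]
    simp only [expect_const hA, expect_const hB]
  rw [pairs]
  exact abs_expect_le _ _

lemma sum_pow_le_two_mul {a M : ℝ} (S : Finset ℕ) (ha₀ : 0 ≤ a) (ha : a ≤ 1 / 2) (hM : 0 ≤ M)
    (h : ∀ k ∈ S, a ^ k ≤ M) : ∑ k ∈ S, a ^ k ≤ 2 * M := by
  rcases S.eq_empty_or_nonempty with rfl | hS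
  · simpa using hM
  set k₀ := S.min' hS
  have hsub : S ⊆ Ico k₀ (S.max' hS + 1) := fun k hk =>
    mem_Ico.2 ⟨S.min'_le k hk, Nat.lt_succ_of_le (S.le_max' k hk)⟩
  have geom : ∑ i ∈ range (S.max' hS + 1 - k₀), a ^ i ≤ 2 :=
    (sum_le_sum fun i _ => pow_le_pow_left₀ ha₀ ha i).trans (sum_geometric_two_le _)
  calc ∑ k ∈ S, a ^ k ≤ ∑ k ∈ Ico k₀ (S.max' hS + 1), a ^ k :=
        sum_le_sum_of_subset_of_nonneg hsub fun _ _ _ => by positivity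
    _ = a ^ k₀ * ∑ i ∈ range (S.max' hS + 1 - k₀), a ^ i := by
        rw [sum_Ico_eq_sum_range, mul_sum]
        simp only [pow_add]
    _ ≤ M * 2 := mul_le_mul (h k₀ (S.min'_mem hS)) geom (by positivity) hM
    _ = 2 * M := mul_comm _ _

lemma card_mul_pow_le_card_piFinset {ι α : Type*} [Fintype ι] [DecidableEq ι] [DecidableEq α]
    {s : ι → Finset α} {S : Finset ι} {v : ι → α} {F : Finset (ι → α)}
    (hF : ∀ y ∈ F, y ∈ Fintype.piFinset s ∧ ∀ i ∈ S, y i = v i) {n : ℕ}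
    (hn : ∀ i ∈ S, n ≤ #(s i)) : #F * n ^ #S ≤ #(Fintype.piFinset s) := by
  have hsub : F ⊆ Fintype.piFinset fun i => if i ∈ S then {v i} else s i := by
    intro y hy
    rw [Fintype.mem_piFinset]
    intro i
    split_ifs with hi
    · exact mem_singleton.2 ((hF y hy).2 i hi)
    · exact Fintype.mem_piFinset.1 (hF y hy).1 i
  have hcard : #(Fintype.piFinset fun i => if i ∈ S then {v i} else s i) = ∏ i ∈ Sᶜ, #(s i) := by
    rw [Fintype.card_piFinset, ← univ_inter Sᶜ, ← prod_ite_mem]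
    refine prod_congr rfl fun i _ => ?_
    by_cases hi : i ∈ S <;> simp [hi]
  calc _ ≤ (∏ i ∈ Sᶜ, #(s i)) * ∏ i ∈ S, #(s i) := by
        gcongr
        · exact hcard ▸ card_le_card hsub
        · exact pow_card_le_prod S _ n hn
    _ = #(Fintype.piFinset s) := by rw [prod_compl_mul_prod, Fintype.card_piFinset]

lemma abs_sub_le_two_mul_sum_of_multiscale {ι : Type*} [DecidableEq ι] {E : Finset ι}
    {Q : ℕ → Finset ι} {G : ℕ → ℝ} {g w : ι → ℝ} {a : ℝ} {K : ℕ}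
    (hQ : ∀ k < K, Q k ⊆ E) (hg : ∀ e ∈ E, 0 ≤ g e) (hw : ∀ e ∈ E, 0 ≤ w e)
    (ha₀ : 0 ≤ a) (ha : a ≤ 1 / 2)
    (hG : ∀ k < K, |G k - G (k + 1)| ≤ a ^ k * ∑ e ∈ Q k, g e)
    (hQw : ∀ k < K, ∀ e ∈ Q k, a ^ k ≤ w e) :
    |G 0 - G K| ≤ 2 * ∑ e ∈ E, w e * g e := by
  calc |G 0 - G K| = |∑ k ∈ range K, (G k - G (k + 1))| := by rw [sum_range_sub']
    _ ≤ ∑ k ∈ range K, |G k - G (k + 1)| := abs_sum_le_sum_abs _ _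
    _ ≤ ∑ k ∈ range K, ∑ e ∈ Q k, a ^ k * g e := by
        simp only [← mul_sum]
        exact sum_le_sum fun k hk => hG k (Finset.mem_range.1 hk)
    _ = ∑ e ∈ E, (∑ k ∈ range K with e ∈ Q k, a ^ k) * g e := by
        simp only [sum_mul]
        refine sum_comm' fun k e => ?_
        simp only [Finset.mem_range, mem_filter]
        exact ⟨fun h => ⟨⟨h.1, h.2⟩, hQ k h.1 h.2⟩, fun h => h.1⟩
    _ ≤ ∑ e ∈ E, 2 * w e * g e := by
        refine sum_le_sum fun e he => mul_le_mul_of_nonneg_right ?_ (hg e he)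
        refine sum_pow_le_two_mul _ ha₀ ha (hw e he) fun k hk => ?_
        simp only [mem_filter, Finset.mem_range] at hk
        exact hQw k hk.1 e hk.2
    _ = 2 * ∑ e ∈ E, w e * g e := by simp only [mul_sum, mul_assoc]

variable {d : ℕ}

-- Letting `t` run from `y j` to `z j` for `j = 0, …, d - 1` walks from `y` to `z`.
def stair (y z : Zd d) (j : Fin d) (t : ℤ) : Zd d :=
  fun i => if i < j then z i else if i = j then t else y i

lemma eplus_stair (y z : Zd d) (j : Fin d) (t : ℤ) :
    eplus (stair y z j t, j) = stair y z j (t + 1) := by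
  funext i
  simp only [eplus, stair, Pi.add_apply]
  rcases lt_trichotomy i j with h | rfl | h
  · simp [h, Pi.single_eq_of_ne h.ne]
  · simp
  · simp [not_lt.2 h.le, h.ne']

def stairPath (y z : Zd d) : Finset (Edge d) :=
  (Finset.univ.sigma fun j => Finset.Ico (min (y j) (z j)) (max (y j) (z j))).image
    fun p => (stair y z p.1 p.2, p.1)

lemma abs_sub_le_sum_stairPath (f : Zd d → ℝ) (y z : Zd d) :
    |f z - f y| ≤ ∑ e ∈ stairPath y z, |f (eplus e) - f e.1| := by
  let mix : ℕ → Zd d := fun m i => if (i : ℕ) < m then z i else y i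
  have mix_lo (j : Fin d) : mix j = stair y z j (y j) := by
    funext i
    rcases lt_trichotomy i j with h | rfl | h
    · simp [mix, stair, h, Fin.lt_def.1 h]
    · simp [mix, stair]
    · simp [mix, stair, h.ne', not_lt.2 h.le, not_lt.2 (Fin.le_def.1 h.le)]
  have mix_hi (j : Fin d) : mix (j + 1) = stair y z j (z j) := by
    funext i
    rcases lt_trichotomy i j with h | rfl | h
    · simp [mix, stair, h, Nat.lt_succ_of_lt (Fin.lt_def.1 h)]
    · simp [mix, stair]
    · simp [mix, stair, h.ne', not_lt.2 h.le, not_le.2 h]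
  have injective : Set.InjOn (fun p : Σ _ : Fin d, ℤ => (stair y z p.1 p.2, p.1))
      (univ.sigma fun j => Ico (min (y j) (z j)) (max (y j) (z j)) : Set (Σ _ : Fin d, ℤ)) := by
    rintro ⟨j, t⟩ - ⟨j', t'⟩ - h
    simp only [Prod.mk.injEq] at h
    obtain ⟨h, rfl⟩ := h
    simpa [stair] using congrFun h j
  have mix_zero : mix 0 = y := by funext i; simp [mix]
  have mix_dim : mix d = z := by funext i; simp [mix, i.isLt]
  calc |f z - f y| = |∑ m ∈ range d, (f (mix (m + 1)) - f (mix m))| := by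
        rw [sum_range_sub (fun m => f (mix m)), mix_dim, mix_zero]
    _ ≤ ∑ j : Fin d, |f (stair y z j (z j)) - f (stair y z j (y j))| := by
        rw [← Fin.sum_univ_eq_sum_range (fun m => f (mix (m + 1)) - f (mix m))]
        simp only [mix_lo, mix_hi]
        exact abs_sum_le_sum_abs _ _
    _ ≤ ∑ j : Fin d, ∑ t ∈ Ico (min (y j) (z j)) (max (y j) (z j)),
          |f (eplus (stair y z j t, j)) - f (stair y z j t)| := by
        gcongr with j
        simpa only [eplus_stair] using abs_sub_le_sum_Ico_abs_sub (fun t => f (stair y z j t)) _ _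
    _ = ∑ e ∈ stairPath y z, |f (eplus e) - f e.1| := by
        rw [stairPath, sum_image injective, sum_sigma]

lemma eq_of_mem_stairPath {y z v : Zd d} {j : Fin d} (h : (v, j) ∈ stairPath y z) :
    (∀ i ∈ Finset.Ioi j, y i = v i) ∧ ∀ i ∈ Finset.Iio j, z i = v i := by
  obtain ⟨⟨j', t⟩, -, h⟩ := Finset.mem_image.1 h
  simp only [Prod.mk.injEq] at h
  obtain ⟨rfl, rfl⟩ := h
  refine ⟨fun i hi => ?_, fun i hi => ?_⟩
  · have hi : j' < i := mem_Ioi.1 hi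
    simp [stair, not_lt.2 hi.le, hi.ne']
  · simp [stair, mem_Iio.1 hi]

def rectEdges (a b : Zd d) : Finset (Edge d) :=
  {e ∈ Finset.Icc a b ×ˢ Finset.univ | eplus e ∈ Finset.Icc a b}

lemma fst_mem_Icc_of_mem_rectEdges {a b : Zd d} {e : Edge d} (he : e ∈ rectEdges a b) :
    e.1 ∈ Finset.Icc a b :=
  (mem_product.1 (mem_filter.1 he).1).1

lemma rectEdges_mono {a b a' b' : Zd d} (ha : a' ≤ a) (hb : b ≤ b') :
    rectEdges a b ⊆ rectEdges a' b' := by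
  intro e he
  simp only [rectEdges, mem_filter, mem_product] at he ⊢
  exact ⟨⟨Finset.Icc_subset_Icc ha hb he.1.1, he.1.2⟩, Finset.Icc_subset_Icc ha hb he.2⟩

lemma stair_mem_Icc {a b y z : Zd d} (hy : y ∈ Finset.Icc a b) (hz : z ∈ Finset.Icc a b)
    {j : Fin d} {t : ℤ} (ht : t ∈ Finset.Icc (a j) (b j)) : stair y z j t ∈ Finset.Icc a b := by
  rw [Finset.mem_Icc] at hy hz ht ⊢
  refine ⟨fun i => ?_, fun i => ?_⟩ <;> simp only [stair] <;> split_ifs with h₁ h₂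
  exacts [hz.1 i, h₂ ▸ ht.1, hy.1 i, hz.2 i, h₂ ▸ ht.2, hy.2 i]

lemma stairPath_subset_rectEdges {a b y z : Zd d} (hy : y ∈ Finset.Icc a b)
    (hz : z ∈ Finset.Icc a b) :
    stairPath y z ⊆ rectEdges a b := by
  intro e he
  obtain ⟨⟨j, t⟩, ht, rfl⟩ := Finset.mem_image.1 he
  simp only [mem_sigma, Finset.mem_univ, true_and, Finset.mem_Ico] at ht
  obtain ⟨hay, hyb⟩ := Finset.mem_Icc.1 hy
  obtain ⟨haz, hzb⟩ := Finset.mem_Icc.1 hz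
  have : a j ≤ y j ∧ y j ≤ b j ∧ a j ≤ z j ∧ z j ≤ b j := ⟨hay j, hyb j, haz j, hzb j⟩
  simp only [rectEdges, mem_filter, mem_product, Finset.mem_univ, and_true, eplus_stair]
  exact ⟨stair_mem_Icc hy hz (Finset.mem_Icc.2 ⟨by omega, by omega⟩),
    stair_mem_Icc hy hz (Finset.mem_Icc.2 ⟨by omega, by omega⟩)⟩

lemma card_filter_mem_stairPath_mul_pow_le (s t : Fin d → Finset ℤ) {n : ℕ}
    (hs : ∀ i, n ≤ #(s i)) (ht : ∀ i, n ≤ #(t i)) (e : Edge d) :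
    #{p ∈ Fintype.piFinset s ×ˢ Fintype.piFinset t | e ∈ stairPath p.1 p.2} * n ^ (d - 1) ≤
      #(Fintype.piFinset s) * #(Fintype.piFinset t) := by
  obtain ⟨v, j⟩ := e
  set Y := {y ∈ Fintype.piFinset s | ∀ i ∈ Finset.Ioi j, y i = v i}
  set Z := {z ∈ Fintype.piFinset t | ∀ i ∈ Finset.Iio j, z i = v i}
  have hsub : {p ∈ Fintype.piFinset s ×ˢ Fintype.piFinset t | (v, j) ∈ stairPath p.1 p.2} ⊆
      Y ×ˢ Z := by
    intro p hp
    obtain ⟨hp, hvj⟩ := mem_filter.1 hp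
    obtain ⟨hy, hz⟩ := mem_product.1 hp
    obtain ⟨hyv, hzv⟩ := eq_of_mem_stairPath hvj
    exact mem_product.2 ⟨mem_filter.2 ⟨hy, hyv⟩, mem_filter.2 ⟨hz, hzv⟩⟩
  have hdim : #(Finset.Ioi j) + #(Finset.Iio j) = d - 1 := by
    rw [Fin.card_Ioi, Fin.card_Iio]
    have := j.isLt
    omega
  calc _ ≤ #Y * #Z * n ^ (d - 1) := by
        gcongr
        exact card_product Y Z ▸ card_le_card hsub
    _ = (#Y * n ^ #(Finset.Ioi j)) * (#Z * n ^ #(Finset.Iio j)) := by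
        rw [← hdim, pow_add]
        ring
    _ ≤ _ := Nat.mul_le_mul
        (card_mul_pow_le_card_piFinset (fun _ hy => mem_filter.1 hy) fun i _ => hs i)
        (card_mul_pow_le_card_piFinset (fun _ hz => mem_filter.1 hz) fun i _ => ht i)

lemma sum_abs_sub_le_sum_rectEdges {a b a' b' : Zd d} (ha : a' ≤ a) (hb : b ≤ b') {n : ℕ}
    (hn : 0 < n) (hside : ∀ i, n ≤ #(Finset.Icc (a i) (b i))) (f : Zd d → ℝ) :
    ∑ p ∈ Finset.Icc a b ×ˢ Finset.Icc a' b', |f p.1 - f p.2| ≤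
      #(Finset.Icc a b) * #(Finset.Icc a' b') / (n : ℝ) ^ (d - 1) *
        ∑ e ∈ rectEdges a' b', |f (eplus e) - f e.1| := by
  set A := Finset.Icc a b
  set B := Finset.Icc a' b'
  have hAB : A ⊆ B := Finset.Icc_subset_Icc ha hb
  have hside' (i : Fin d) : n ≤ #(Finset.Icc (a' i) (b' i)) :=
    (hside i).trans (card_le_card (Finset.Icc_subset_Icc (ha i) (hb i)))
  have hpath (p) (hp : p ∈ A ×ˢ B) : stairPath p.1 p.2 ⊆ rectEdges a' b' :=
    stairPath_subset_rectEdges (hAB (mem_product.1 hp).1) (mem_product.1 hp).2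
  have hcount (e : Edge d) : (#{p ∈ A ×ˢ B | e ∈ stairPath p.1 p.2} : ℝ) ≤
      #A * #B / (n : ℝ) ^ (d - 1) := by
    rw [le_div_iff₀ (by positivity)]
    exact_mod_cast card_filter_mem_stairPath_mul_pow_le _ _ hside hside' e
  calc ∑ p ∈ A ×ˢ B, |f p.1 - f p.2|
      ≤ ∑ p ∈ A ×ˢ B, ∑ e ∈ stairPath p.1 p.2, |f (eplus e) - f e.1| := by
        gcongr with p
        rw [abs_sub_comm]
        exact abs_sub_le_sum_stairPath f p.1 p.2
    _ = ∑ e ∈ rectEdges a' b', #{p ∈ A ×ˢ B | e ∈ stairPath p.1 p.2} * |f (eplus e) - f e.1| := by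
        rw [sum_comm' (t' := rectEdges a' b') (s' := fun e => {p ∈ A ×ˢ B | e ∈ stairPath p.1 p.2})]
        · simp only [sum_const, nsmul_eq_mul]
        · intro p e
          rw [mem_filter]
          exact ⟨fun h => ⟨⟨h.1, h.2⟩, hpath p h.1 h.2⟩, fun h => h.1⟩
    _ ≤ ∑ e ∈ rectEdges a' b', #A * #B / (n : ℝ) ^ (d - 1) * |f (eplus e) - f e.1| := by
        gcongr with e
        exact hcount e
    _ = _ := by rw [mul_sum]

theorem abs_expect_Icc_sub_expect_Icc_le {a b a' b' : Zd d} (ha : a' ≤ a) (hb : b ≤ b') {n : ℕ}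
    (hn : 0 < n) (hside : ∀ i, n ≤ #(Finset.Icc (a i) (b i))) (f : Zd d → ℝ) :
    |𝔼 y ∈ Finset.Icc a b, f y - 𝔼 z ∈ Finset.Icc a' b', f z| ≤
      ((n : ℝ) ^ (d - 1))⁻¹ * ∑ e ∈ rectEdges a' b', |f (eplus e) - f e.1| := by
  have hA : (Finset.Icc a b).Nonempty := Finset.nonempty_Icc.2 fun i =>
    Finset.nonempty_Icc.1 (card_pos.1 (hn.trans_le (hside i)))
  have hB : (Finset.Icc a' b').Nonempty := hA.mono (Finset.Icc_subset_Icc ha hb)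
  refine (abs_expect_sub_expect_le hA hB f).trans ?_
  rw [expect_eq_sum_div_card, card_product, Nat.cast_mul,
    div_le_iff₀ (mul_pos (by exact_mod_cast hA.card_pos) (by exact_mod_cast hB.card_pos))]
  refine (sum_abs_sub_le_sum_rectEdges ha hb hn hside f).trans_eq ?_
  field_simp

lemma box_eq_Icc (d r : ℕ) : box d r = Finset.Icc (fun _ => -(r : ℤ)) fun _ => (r : ℤ) := rfl

lemma mem_box {r : ℕ} {x : Zd d} : x ∈ box d r ↔ ∀ i, -(r : ℤ) ≤ x i ∧ x i ≤ r := by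
  simp only [box, Fintype.mem_piFinset, Finset.mem_Icc]

lemma eucNorm_nonneg (u : Zd d) : 0 ≤ eucNorm u := Real.sqrt_nonneg _

lemma eucNorm_le_sqrt_mul {u : Zd d} {R : ℝ} (hR : 0 ≤ R) (hu : ∀ i, |(u i : ℝ)| ≤ R) :
    eucNorm u ≤ √d * R := by
  have hsq : ∑ i, ((u i : ℝ)) ^ 2 ≤ d * R ^ 2 := by
    calc ∑ i, ((u i : ℝ)) ^ 2 ≤ ∑ _i : Fin d, R ^ 2 :=
          sum_le_sum fun i _ => sq_le_sq' (abs_le.1 (hu i)).1 (abs_le.1 (hu i)).2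
      _ = d * R ^ 2 := by simp
  calc eucNorm u ≤ √(d * R ^ 2) := Real.sqrt_le_sqrt hsq
    _ = √d * R := by rw [Real.sqrt_mul (Nat.cast_nonneg d), Real.sqrt_sq hR]

lemma inv_two_pow_pow_le_of_abs_le (hd : 1 ≤ d) {u : Zd d} {k : ℕ}
    (hu : ∀ i, |(u i : ℝ)| ≤ 2 ^ (k + 1) - 1) :
    ((2 : ℝ) ^ (d - 1))⁻¹ ^ k ≤ (2 * √d) ^ (d - 1) * (1 + eucNorm u) ^ (-((d : ℝ) - 1)) := by
  have hsqrt : 1 ≤ √(d : ℝ) := Real.one_le_sqrt.2 (by exact_mod_cast hd)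
  have hρ : 1 ≤ 1 + eucNorm u := le_add_of_nonneg_right (eucNorm_nonneg u)
  have hρ' : 1 + eucNorm u ≤ 2 * √d * 2 ^ k := by
    have h₁ : (1 : ℝ) ≤ 2 ^ (k + 1) := one_le_pow₀ one_le_two
    have h₂ := eucNorm_le_sqrt_mul (sub_nonneg.2 h₁) hu
    have h₃ : √(d : ℝ) * (2 ^ (k + 1) - 1) = 2 * √d * 2 ^ k - √d := by ring
    linarith
  have hexp : -((d : ℝ) - 1) = -((d - 1 : ℕ) : ℝ) := by rw [Nat.cast_sub hd, Nat.cast_one]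
  rw [hexp, Real.rpow_neg (by linarith), Real.rpow_natCast, ← inv_pow, ← pow_mul, mul_comm,
    pow_mul, inv_pow, ← div_eq_mul_inv, ← div_pow, ← inv_pow]
  gcongr
  rw [inv_pow, le_div_iff₀ (by positivity), inv_mul_le_iff₀ (by positivity)]
  linarith

section Dyadic

variable {r : ℕ} {x : Zd d}

def dyadicLo (r : ℕ) (x : Zd d) (k : ℕ) : Zd d := fun i => max (x i - (2 ^ k - 1)) (-r)

def dyadicHi (r : ℕ) (x : Zd d) (k : ℕ) : Zd d := fun i => min (x i + (2 ^ k - 1)) r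

lemma dyadicLo_succ_le (k : ℕ) : dyadicLo r x (k + 1) ≤ dyadicLo r x k := fun i => by
  have : (2 : ℤ) ^ k ≤ 2 ^ (k + 1) := pow_le_pow_right₀ one_le_two k.le_succ
  simp only [dyadicLo]
  omega

lemma dyadicHi_le_succ (k : ℕ) : dyadicHi r x k ≤ dyadicHi r x (k + 1) := fun i => by
  have : (2 : ℤ) ^ k ≤ 2 ^ (k + 1) := pow_le_pow_right₀ one_le_two k.le_succ
  simp only [dyadicHi]
  omega

lemma rectEdges_dyadic_subset_edgeBox (k : ℕ) :
    rectEdges (dyadicLo r x k) (dyadicHi r x k) ⊆ edgeBox d r :=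
  rectEdges_mono (fun _ => le_max_right _ _) fun _ => min_le_right _ _

lemma abs_sub_le_of_mem_Icc_dyadic {k : ℕ} {v : Zd d}
    (hv : v ∈ Finset.Icc (dyadicLo r x k) (dyadicHi r x k)) (i : Fin d) :
    |((x - v) i : ℝ)| ≤ 2 ^ k - 1 := by
  obtain ⟨hlo, hhi⟩ := Finset.mem_Icc.1 hv
  have h₁ : x i - (2 ^ k - 1) ≤ v i := (le_max_left _ _).trans (hlo i)
  have h₂ : v i ≤ x i + (2 ^ k - 1) := (hhi i).trans (min_le_left _ _)
  have : |x i - v i| ≤ 2 ^ k - 1 := abs_le.2 ⟨by omega, by omega⟩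
  exact_mod_cast this

variable (hx : x ∈ box d r)
include hx

lemma Icc_dyadic_zero : Finset.Icc (dyadicLo r x 0) (dyadicHi r x 0) = {x} := by
  rw [← Finset.Icc_self x]
  congr 1 <;> funext i <;> have := mem_box.1 hx i
  · simp only [dyadicLo, pow_zero, sub_self, sub_zero]; omega
  · simp only [dyadicHi, pow_zero, sub_self, add_zero]; omega

lemma Icc_dyadic_eq_box {k : ℕ} (hk : 2 * r + 1 ≤ 2 ^ k) :
    Finset.Icc (dyadicLo r x k) (dyadicHi r x k) = box d r := by
  have hk : (2 * r + 1 : ℤ) ≤ (2 : ℤ) ^ k := by exact_mod_cast hk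
  rw [box_eq_Icc]
  congr 1 <;> funext i <;> have := mem_box.1 hx i
  · simp only [dyadicLo]; omega
  · simp only [dyadicHi]; omega

lemma le_card_Icc_dyadic {k : ℕ} (hk : 2 ^ k ≤ 2 * r + 1) (i : Fin d) :
    2 ^ k ≤ #(Finset.Icc (dyadicLo r x k i) (dyadicHi r x k i)) := by
  have hk : (2 : ℤ) ^ k ≤ 2 * r + 1 := by exact_mod_cast hk
  have : (1 : ℤ) ≤ 2 ^ k := one_le_pow₀ one_le_two
  have : ((2 ^ k : ℕ) : ℤ) = 2 ^ k := by push_cast; rfl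
  have := mem_box.1 hx i
  rw [Int.card_Icc]
  simp only [dyadicLo, dyadicHi]
  omega

lemma abs_expect_dyadic_sub_succ_le {k : ℕ} (hk : 2 ^ k ≤ 2 * r + 1) (f : Zd d → ℝ) :
    |𝔼 y ∈ Finset.Icc (dyadicLo r x k) (dyadicHi r x k), f y -
        𝔼 y ∈ Finset.Icc (dyadicLo r x (k + 1)) (dyadicHi r x (k + 1)), f y| ≤
      ((2 : ℝ) ^ (d - 1))⁻¹ ^ k *
        ∑ e ∈ rectEdges (dyadicLo r x (k + 1)) (dyadicHi r x (k + 1)), |f (eplus e) - f e.1| := by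
  have hpow : ((2 : ℝ) ^ (d - 1))⁻¹ ^ k = (((2 ^ k : ℕ) : ℝ) ^ (d - 1))⁻¹ := by
    push_cast
    rw [inv_pow, ← pow_mul, ← pow_mul, mul_comm]
  exact hpow ▸ abs_expect_Icc_sub_expect_Icc_le (dyadicLo_succ_le k) (dyadicHi_le_succ k)
    (pow_pos two_pos k) (le_card_Icc_dyadic hx hk) f

end Dyadic

/-- Potential-kernel bound on the oscillation of a function around
its box average (inequality (2.8) in the proof of Theorem 2.5). -/
theorem potential_kernel_oscillation_bound
    (d : ℕ) (hd : 2 ≤ d) :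
    ∃ C : ℝ, 0 ≤ C ∧ ∀ r : ℕ, 1 ≤ r → ∀ f : Zd d → ℝ, ∀ x ∈ box d r,
      |f x - avg d r f| ≤
        C * ∑ e ∈ edgeBox d r,
          (1 + eucNorm (x - e.1)) ^ (-((d : ℝ) - 1)) * |f (eplus e) - f e.1| := by
  refine ⟨2 * (2 * √d) ^ (d - 1), by positivity, fun r _ f x hx => ?_⟩
  have hK : 2 * r + 1 ≤ 2 ^ Nat.clog 2 (2 * r + 1) := Nat.le_pow_clog one_lt_two _
  have ha : ((2 : ℝ) ^ (d - 1))⁻¹ ≤ 1 / 2 := by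
    rw [one_div]
    exact inv_anti₀ two_pos (le_self_pow₀ one_le_two (by omega))
  have key := abs_sub_le_two_mul_sum_of_multiscale (E := edgeBox d r)
    (Q := fun k => rectEdges (dyadicLo r x (k + 1)) (dyadicHi r x (k + 1)))
    (G := fun k => 𝔼 y ∈ Finset.Icc (dyadicLo r x k) (dyadicHi r x k), f y)
    (g := fun e => |f (eplus e) - f e.1|)
    (w := fun e => (2 * √d) ^ (d - 1) * (1 + eucNorm (x - e.1)) ^ (-((d : ℝ) - 1)))
    (fun _ _ => rectEdges_dyadic_subset_edgeBox _) (fun _ _ => abs_nonneg _)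
    (fun _ _ => mul_nonneg (by positivity)
      (Real.rpow_nonneg (add_nonneg zero_le_one (eucNorm_nonneg _)) _)) (by positivity) ha
    (fun k hk => abs_expect_dyadic_sub_succ_le hx (Nat.pow_lt_of_lt_clog hk).le f)
    (fun k _ _ he => inv_two_pow_pow_le_of_abs_le (by omega)
      (abs_sub_le_of_mem_Icc_dyadic (fst_mem_Icc_of_mem_rectEdges he)))
  rw [Icc_dyadic_zero hx, Icc_dyadic_eq_box hx hK, expect_singleton,
    expect_eq_sum_div_card] at key
  calc |f x - avg d r f| ≤ _ := key
    _ = _ := by simp only [mul_sum, mul_assoc]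

end AnchoredNash
end
end

section
/- A criterion for moderation (Proposition 4.6): There exists a constant c < ∞, depending only on d, such that the following holds. Let k : ℝ₊ → ℝ₊ be measurable with ∫_0^∞ (1+t²) k_t dt < ∞, define K_t = k_t + ∫_t^∞ s k_s ds, and, for a dynamic environment a, define weights by w_t(e)² = ∫_t^∞ k_{s−t} a_s(e) ds. Then the environment a is (w, cK)-moderate; that is, for every t ≥ 0, ∑_{e∈𝔹} w_t(e)² |∇u_t|(e)² ≤ c ∫_t^∞ K_{s−t} D_s ds. -/
open scoped ENNReal NNReal
open Set MeasureTheory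

noncomputable section

/-!
Fix `t ≤ s`. Comparing `∇u_t` with `∇u_s` edge by edge gives
`∑ₑ a_s(e) |∇u_t|(e)² ≤ 2 D_s + 8d ‖u_s - u_t‖₂²`. Since `u_s - u_t = ∫_t^s L_τ u_τ dτ`, with
`L_τ` the generator of `a_τ`, and `‖L_τ u_τ‖₂² ≤ 4d D_τ`, Cauchy–Schwarz in time gives
`‖u_s - u_t‖₂² ≤ 4d (s - t) ∫_t^s D_τ dτ`.
Integrating against `k_{s-t} ds` and exchanging the order of integration turns this term into
`∫_t^∞ (∫_{τ-t}^∞ σ k_σ dσ) D_τ dτ`, which is dominated by `∫_t^∞ K_{τ-t} D_τ dτ`;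
hence `c = 2 + 32 d²`.
-/

namespace AnchoredNash

section Lattice

variable {d : ℕ}

lemma grad2_eq (f : Zd d → ℝ) (e : Edge d) :
    grad2 f e = ENNReal.ofReal ((f (eplus e) - f e.1) ^ 2) := by
  rw [grad2, ← sq_abs, ENNReal.ofReal_pow (abs_nonneg _), ← Real.enorm_eq_ofReal_abs,
    enorm_eq_nnnorm]

lemma ofReal_sub_sq_le (x y : ℝ) :
    ENNReal.ofReal ((x - y) ^ 2) ≤ 2 * ENNReal.ofReal (x ^ 2) + 2 * ENNReal.ofReal (y ^ 2) := by
  calc ENNReal.ofReal ((x - y) ^ 2) ≤ ENNReal.ofReal (2 * x ^ 2 + 2 * y ^ 2) :=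
        ENNReal.ofReal_le_ofReal (by nlinarith [sq_nonneg (x + y)])
    _ = 2 * ENNReal.ofReal (x ^ 2) + 2 * ENNReal.ofReal (y ^ 2) := by
        rw [ENNReal.ofReal_add (by positivity) (by positivity), ENNReal.ofReal_mul zero_le_two,
          ENNReal.ofReal_mul zero_le_two, ENNReal.ofReal_ofNat]

lemma grad2_le (f g : Zd d → ℝ) (e : Edge d) :
    grad2 f e ≤ 2 * grad2 g e + 2 * grad2 (g - f) e := by
  simp only [grad2_eq, Pi.sub_apply]
  convert ofReal_sub_sq_le (g (eplus e) - g e.1) (g (eplus e) - f (eplus e) - (g e.1 - f e.1))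
    using 3
  ring

lemma tsum_edge_eq_sum_tsum (P : Edge d → ℝ≥0∞) :
    ∑' e, P e = ∑ i, ∑' x, P (x, i) := by
  rw [ENNReal.tsum_prod' (f := P), ENNReal.tsum_comm, tsum_fintype]

lemma tsum_grad2_le (f : Zd d → ℝ) :
    ∑' e, grad2 f e ≤ 4 * d * ∑' y, ENNReal.ofReal (f y ^ 2) := by
  have hshift : ∀ i : Fin d, ∑' x : Zd d, ENNReal.ofReal (f (eplus (x, i)) ^ 2)
      = ∑' y, ENNReal.ofReal (f y ^ 2) := fun i =>
    (Equiv.addRight (Pi.single i 1 : Zd d)).tsum_eq fun y => ENNReal.ofReal (f y ^ 2)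
  calc ∑' e, grad2 f e
      ≤ ∑' e : Edge d, (2 * ENNReal.ofReal (f (eplus e) ^ 2) + 2 * ENNReal.ofReal (f e.1 ^ 2)) :=
        ENNReal.tsum_le_tsum fun e => (grad2_eq f e).trans_le (ofReal_sub_sq_le _ _)
    _ = 4 * d * ∑' y, ENNReal.ofReal (f y ^ 2) := by
        rw [ENNReal.tsum_add, ENNReal.tsum_mul_left, ENNReal.tsum_mul_left,
          tsum_edge_eq_sum_tsum, tsum_edge_eq_sum_tsum (fun e => ENNReal.ofReal (f e.1 ^ 2))]
        simp only [hshift, Finset.sum_const, Finset.card_univ, Fintype.card_fin, nsmul_eq_mul]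
        ring

lemma dirichlet_le_two_mul_dirichlet_add (a : Edge d → ℝ) (ha : ∀ e, a e ≤ 1)
    (f g : Zd d → ℝ) :
    dirichlet a f ≤ 2 * dirichlet a g + 8 * d * ∑' y, ENNReal.ofReal ((g y - f y) ^ 2) := by
  have hedge : ∀ e, ENNReal.ofReal (a e) * grad2 f e
      ≤ 2 * (ENNReal.ofReal (a e) * grad2 g e) + 2 * grad2 (g - f) e := fun e => by
    have ha₁ : ENNReal.ofReal (a e) ≤ 1 := ENNReal.ofReal_le_one.2 (ha e)
    calc ENNReal.ofReal (a e) * grad2 f e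
        ≤ ENNReal.ofReal (a e) * (2 * grad2 g e + 2 * grad2 (g - f) e) := by
          gcongr; exact grad2_le f g e
      _ ≤ 2 * (ENNReal.ofReal (a e) * grad2 g e) + 1 * (2 * grad2 (g - f) e) := by
          rw [mul_add, mul_left_comm]; gcongr
      _ = 2 * (ENNReal.ofReal (a e) * grad2 g e) + 2 * grad2 (g - f) e := by rw [one_mul]
  calc dirichlet a f ≤ 2 * dirichlet a g + 2 * ∑' e, grad2 (g - f) e := by
        rw [dirichlet, dirichlet, ← ENNReal.tsum_mul_left, ← ENNReal.tsum_mul_left,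
          ← ENNReal.tsum_add]
        exact ENNReal.tsum_le_tsum hedge
    _ ≤ 2 * dirichlet a g + 2 * (4 * d * ∑' y, ENNReal.ofReal ((g y - f y) ^ 2)) := by
        gcongr
        exact tsum_grad2_le (g - f)
    _ = 2 * dirichlet a g + 8 * d * ∑' y, ENNReal.ofReal ((g y - f y) ^ 2) := by ring

end Lattice

section Generator

variable {d : ℕ}

lemma abs_gen_le (a : Edge d → ℝ) (ha : ∀ e, a e ∈ Icc (0:ℝ) 1) (u : Zd d → ℝ)
    (hu : ∀ z, u z ∈ Icc (0:ℝ) 1) (y : Zd d) : |gen a u y| ≤ 2 * d := by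
  have hterm : ∀ e z z', |a e * (u z - u z')| ≤ 1 := fun e z z' => by
    rw [abs_mul]
    exact mul_le_one₀ (abs_le.2 ⟨by linarith [(ha e).1], (ha e).2⟩) (abs_nonneg _)
      (abs_sub_le_iff.2 ⟨by linarith [(hu z).2, (hu z').1], by linarith [(hu z).1, (hu z').2]⟩)
  calc |gen a u y| ≤ ∑ _i : Fin d, (2 : ℝ) := by
        refine (Finset.abs_sum_le_sum_abs _ _).trans (Finset.sum_le_sum fun i _ => ?_)
        have h₁ := hterm (y, i) (y + Pi.single i 1) y
        have h₂ := hterm (y - Pi.single i 1, i) (y - Pi.single i 1) y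
        linarith [abs_add_le (a (y, i) * (u (y + Pi.single i 1) - u y))
          (a (y - Pi.single i 1, i) * (u (y - Pi.single i 1) - u y))]
    _ = 2 * d := by simp [mul_comm]

lemma ofReal_sq_gen_le (a : Edge d → ℝ) (ha : ∀ e, a e ∈ Icc (0:ℝ) 1) (u : Zd d → ℝ)
    (y : Zd d) :
    ENNReal.ofReal (gen a u y ^ 2) ≤ 2 * d * ∑ i, (ENNReal.ofReal (a (y, i)) * grad2 u (y, i)
      + ENNReal.ofReal (a (y - Pi.single i 1, i)) * grad2 u (y - Pi.single i 1, i)) := by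
  have hpair : ∀ a₁ a₂ x z : ℝ, a₁ ∈ Icc (0:ℝ) 1 → a₂ ∈ Icc (0:ℝ) 1 →
      (a₁ * x + a₂ * z) ^ 2 ≤ 2 * (a₁ * x ^ 2 + a₂ * z ^ 2) := fun a₁ a₂ x z h₁ h₂ => by
    nlinarith [sq_nonneg (a₁ * x - a₂ * z), mul_nonneg (mul_nonneg (sub_nonneg.2 h₁.2) h₁.1)
      (sq_nonneg x), mul_nonneg (mul_nonneg (sub_nonneg.2 h₂.2) h₂.1) (sq_nonneg z)]
  set A : Fin d → ℝ := fun i => a (y, i) * (u (y + Pi.single i 1) - u y) ^ 2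
  set B : Fin d → ℝ := fun i => a (y - Pi.single i 1, i) * (u (y - Pi.single i 1) - u y) ^ 2
  have hA : ∀ i, ENNReal.ofReal (A i) = ENNReal.ofReal (a (y, i)) * grad2 u (y, i) := fun i => by
    rw [ENNReal.ofReal_mul (ha _).1, grad2_eq]; rfl
  have hB : ∀ i, ENNReal.ofReal (B i)
      = ENNReal.ofReal (a (y - Pi.single i 1, i)) * grad2 u (y - Pi.single i 1, i) := fun i => by
    have hback : eplus ((y - Pi.single i 1, i) : Edge d) = y := by simp [eplus]
    rw [ENNReal.ofReal_mul (ha _).1, grad2_eq, hback, sub_sq_comm]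
  have hreal : gen a u y ^ 2 ≤ d * ∑ i, 2 * (A i + B i) := by
    refine (sq_sum_le_card_mul_sum_sq ..).trans ?_
    rw [Finset.card_univ, Fintype.card_fin]
    gcongr with i
    exact hpair _ _ _ _ (ha _) (ha _)
  refine (ENNReal.ofReal_le_ofReal hreal).trans_eq ?_
  have hA₀ : ∀ i, 0 ≤ A i := fun i => mul_nonneg (ha _).1 (sq_nonneg _)
  have hB₀ : ∀ i, 0 ≤ B i := fun i => mul_nonneg (ha _).1 (sq_nonneg _)
  rw [ENNReal.ofReal_mul (by positivity),
    ENNReal.ofReal_sum_of_nonneg fun i _ => by have := hA₀ i; have := hB₀ i; positivity]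
  simp only [ENNReal.ofReal_mul zero_le_two, ENNReal.ofReal_add (hA₀ _) (hB₀ _), hA, hB,
    ENNReal.ofReal_ofNat, ENNReal.ofReal_natCast, ← Finset.mul_sum]
  ring

lemma tsum_ofReal_sq_gen_le (a : Edge d → ℝ) (ha : ∀ e, a e ∈ Icc (0:ℝ) 1) (u : Zd d → ℝ) :
    ∑' y, ENNReal.ofReal (gen a u y ^ 2) ≤ 4 * d * dirichlet a u := by
  set P : Edge d → ℝ≥0∞ := fun e => ENNReal.ofReal (a e) * grad2 u e
  have hshift : ∀ i : Fin d, ∑' y : Zd d, P (y - Pi.single i 1, i) = ∑' y, P (y, i) := fun i =>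
    (Equiv.subRight (Pi.single i 1 : Zd d)).tsum_eq fun y => P (y, i)
  calc ∑' y, ENNReal.ofReal (gen a u y ^ 2)
      ≤ ∑' y : Zd d, 2 * d * ∑ i, (P (y, i) + P (y - Pi.single i 1, i)) :=
        ENNReal.tsum_le_tsum (ofReal_sq_gen_le a ha u)
    _ = 2 * d * ∑ i, (∑' y : Zd d, P (y, i) + ∑' y : Zd d, P (y - Pi.single i 1, i)) := by
        rw [ENNReal.tsum_mul_left, Summable.tsum_finsetSum fun _ _ => ENNReal.summable]
        simp only [ENNReal.tsum_add]
    _ = 4 * d * dirichlet a u := by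
        rw [dirichlet, tsum_edge_eq_sum_tsum]
        simp only [hshift, ← two_mul, ← Finset.mul_sum]
        ring

end Generator

lemma PiecewiseCts.aemeasurable {g : ℝ → ℝ} (hg : PiecewiseCts g) : AEMeasurable g := by
  obtain ⟨D, hD, hcont⟩ := hg
  rw [← Measure.restrict_eq_self_of_ae_mem (hD.ae_notMem volume)]
  exact ContinuousOn.aemeasurable (fun t ht => (hcont t ht).continuousWithinAt)
    hD.measurableSet.compl

lemma aemeasurable_primitive (F : ℝ → ℝ) (c : ℝ) :
    AEMeasurable (fun r => ∫ τ in c..r, F τ) (volume.restrict (Ici c)) := by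
  set G : ℝ → ℝ := fun r => ∫ τ in c..r, F τ
  -- `G` is continuous on the interval `A` of endpoints up to which `F` is integrable,
  -- and vanishes (as a junk value) beyond it.
  set A : Set ℝ := {r | c ≤ r ∧ IntegrableOn F (Ioc c r)}
  have hA : A.OrdConnected := ⟨fun x hx y hy z hz =>
    ⟨hx.1.trans hz.1, hy.2.mono_set (Ioc_subset_Ioc_right hz.2)⟩⟩
  have hcontIcc : ∀ r ∈ A, ContinuousOn G (Icc c r) := fun r hr => by
    rw [← uIcc_of_le hr.1]
    exact intervalIntegral.continuousOn_primitive_interval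
      (by rw [uIcc_of_le hr.1, integrableOn_Icc_iff_integrableOn_Ioc]; exact hr.2)
  have hcont : ContinuousOn G A := fun r hr => by
    by_cases hbeyond : ∃ r' ∈ A, r < r'
    · obtain ⟨r', hr', hlt⟩ := hbeyond
      refine ((hcontIcc r' hr') r ⟨hr.1, hlt.le⟩).mono_of_mem_nhdsWithin ?_
      exact mem_nhdsWithin.2 ⟨Iio r', isOpen_Iio, hlt, fun x hx => ⟨hx.2.1, hx.1.le⟩⟩
    · push Not at hbeyond
      exact ((hcontIcc r hr) r ⟨hr.1, le_rfl⟩).mono fun x hx => ⟨hx.1, hbeyond x hx⟩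
  have hzero : ∀ r ∈ Ici c \ A, G r = 0 := fun r hr => intervalIntegral.integral_undef
    fun hint => hr.2 ⟨hr.1, (intervalIntegrable_iff_integrableOn_Ioc_of_le hr.1).1 hint⟩
  have hAm : MeasurableSet A := hA.measurableSet
  have hsplit : A ∪ (Ici c \ A) = Ici c := union_sdiff_cancel fun r hr => hr.1
  rw [← hsplit, aemeasurable_union_iff]
  refine ⟨hcont.aemeasurable hAm, (aemeasurable_const (b := (0:ℝ))).congr ?_⟩
  filter_upwards [ae_restrict_mem (measurableSet_Ici.diff hAm)] with r hr
  exact (hzero r hr).symm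

lemma sq_lintegral_le {α : Type*} [MeasurableSpace α] {μ : Measure α} {f : α → ℝ≥0∞}
    (hf : AEMeasurable f μ) : (∫⁻ x, f x ∂μ) ^ 2 ≤ (∫⁻ x, f x ^ 2 ∂μ) * μ univ := by
  have hcs := ENNReal.lintegral_mul_le_Lp_mul_Lq μ Real.HolderConjugate.two_two hf
    (aemeasurable_const (b := (1 : ℝ≥0∞)))
  simp only [Pi.mul_apply, mul_one, ENNReal.one_rpow, lintegral_one] at hcs
  calc (∫⁻ x, f x ∂μ) ^ 2
      ≤ ((∫⁻ x, f x ^ (2:ℝ) ∂μ) ^ (1 / 2 : ℝ) * μ univ ^ (1 / 2 : ℝ)) ^ (2:ℝ) := by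
        rw [ENNReal.rpow_two]; gcongr
    _ = (∫⁻ x, f x ^ 2 ∂μ) * μ univ := by
        rw [ENNReal.mul_rpow_of_nonneg _ _ zero_le_two, ← ENNReal.rpow_mul, ← ENNReal.rpow_mul]
        norm_num

lemma setLIntegral_Ici_comp_sub (f : ℝ → ℝ≥0∞) (τ t : ℝ) :
    ∫⁻ s in Ici τ, f (s - t) = ∫⁻ σ in Ici (τ - t), f σ := by
  rw [(measurePreserving_sub_right volume t).setLIntegral_comp_emb
    (measurableEmbedding_subRight t), image_sub_const_Ici]

lemma lintegral_mul_setLIntegral_Ioc {g D : ℝ → ℝ≥0∞} {t : ℝ} (hg : Measurable g)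
    (hD : AEMeasurable D (volume.restrict (Ioi t))) :
    ∫⁻ s in Ici t, g s * ∫⁻ τ in Ioc t s, D τ = ∫⁻ τ in Ioi t, (∫⁻ s in Ici τ, g s) * D τ := by
  have hIoc : ∀ s, ∫⁻ τ in Ioc t s, D τ = ∫⁻ τ in Ioi t, (Iic s).indicator D τ := fun s => by
    rw [lintegral_indicator measurableSet_Iic, Measure.restrict_restrict measurableSet_Iic,
      Iic_inter_Ioi]
  have hjoint : AEMeasurable (fun p : ℝ × ℝ => g p.1 * (Iic p.1).indicator D p.2)
      ((volume.restrict (Ici t)).prod (volume.restrict (Ioi t))) := by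
    have hset : MeasurableSet {p : ℝ × ℝ | p.2 ≤ p.1} :=
      measurableSet_le measurable_snd measurable_fst
    refine (hg.comp measurable_fst).aemeasurable.mul ?_
    exact ((hD.comp_quasiMeasurePreserving Measure.quasiMeasurePreserving_snd).indicator hset)
  calc ∫⁻ s in Ici t, g s * ∫⁻ τ in Ioc t s, D τ
      = ∫⁻ s in Ici t, ∫⁻ τ in Ioi t, g s * (Iic s).indicator D τ := by
        refine lintegral_congr fun s => ?_
        rw [hIoc, lintegral_const_mul'' _ ((hD.indicator measurableSet_Iic))]
    _ = ∫⁻ τ in Ioi t, ∫⁻ s in Ici t, g s * (Iic s).indicator D τ :=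
        lintegral_lintegral_swap hjoint
    _ = ∫⁻ τ in Ioi t, (∫⁻ s in Ici τ, g s) * D τ := by
        refine setLIntegral_congr_fun measurableSet_Ioi fun τ hτ => ?_
        calc ∫⁻ s in Ici t, g s * (Iic s).indicator D τ
            = ∫⁻ s in Ici t, (Ici τ).indicator g s * D τ := by
              congr 1 with s
              by_cases h : τ ≤ s <;> simp [h]
          _ = (∫⁻ s in Ici τ, g s) * D τ := by
              rw [lintegral_mul_const _ (hg.indicator measurableSet_Ici),
                lintegral_indicator measurableSet_Ici, Measure.restrict_restrict measurableSet_Ici,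
                Ici_inter_Ici, max_eq_left (le_of_lt hτ)]

lemma setLIntegral_ofReal_mul_sub_mul_setLIntegral_Ioc {k : ℝ → ℝ} (hkm : Measurable k)
    (hk₀ : ∀ s, 0 ≤ k s) (hint : IntegrableOn (fun σ => σ * k σ) (Ici 0)) {D : ℝ → ℝ≥0∞} {t : ℝ}
    (hD : AEMeasurable D (volume.restrict (Ioi t))) :
    ∫⁻ s in Ici t, ENNReal.ofReal (k (s - t)) * (ENNReal.ofReal (s - t) * ∫⁻ τ in Ioc t s, D τ)
      = ∫⁻ τ in Ioi t, ENNReal.ofReal (∫ σ in Ici (τ - t), σ * k σ) * D τ := by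
  have hg : Measurable fun s => ENNReal.ofReal (k (s - t)) * ENNReal.ofReal (s - t) :=
    (hkm.comp (measurable_sub_const t)).ennreal_ofReal.mul
      (measurable_sub_const t).ennreal_ofReal
  simp_rw [← mul_assoc]
  rw [lintegral_mul_setLIntegral_Ioc hg hD]
  refine setLIntegral_congr_fun measurableSet_Ioi fun τ hτ => ?_
  have hτt : 0 ≤ τ - t := sub_nonneg.2 (le_of_lt hτ)
  rw [setLIntegral_Ici_comp_sub (fun σ => ENNReal.ofReal (k σ) * ENNReal.ofReal σ),
    ofReal_integral_eq_lintegral_ofReal (hint.mono_set (Ici_subset_Ici.2 hτt))]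
  · simp_rw [ENNReal.ofReal_mul' (hk₀ _), mul_comm]
  · filter_upwards [ae_restrict_mem measurableSet_Ici] with σ hσ
    exact mul_nonneg (hτt.trans hσ) (hk₀ σ)

lemma setLIntegral_ofReal_mul_add_le_tail {k : ℝ → ℝ} (hkm : Measurable k) (hk₀ : ∀ s, 0 ≤ k s)
    (hint : IntegrableOn (fun σ => σ * k σ) (Ici 0)) {D : ℝ → ℝ≥0∞} {t : ℝ}
    (hD : AEMeasurable D (volume.restrict (Ici t))) (B : ℝ≥0∞) {C : ℝ≥0∞} (hC : C ≠ ⊤) :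
    ∫⁻ s in Ici t, ENNReal.ofReal (k (s - t))
        * (B * D s + C * (ENNReal.ofReal (s - t) * ∫⁻ τ in Ioc t s, D τ))
      ≤ (B + C)
        * ∫⁻ s in Ici t, ENNReal.ofReal (k (s - t) + ∫ σ in Ici (s - t), σ * k σ) * D s := by
  set J : ℝ → ℝ := fun v => ∫ σ in Ici v, σ * k σ
  set Z := ∫⁻ s in Ici t, ENNReal.ofReal (k (s - t) + J (s - t)) * D s
  have hJ₀ : ∀ v, 0 ≤ v → 0 ≤ J v := fun v hv =>
    setIntegral_nonneg measurableSet_Ici fun σ hσ => mul_nonneg (hv.trans hσ) (hk₀ σ)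
  have hkD : AEMeasurable (fun s => ENNReal.ofReal (k (s - t)) * D s) (volume.restrict (Ici t)) :=
    (hkm.comp (measurable_sub_const t)).ennreal_ofReal.aemeasurable.mul hD
  calc ∫⁻ s in Ici t, ENNReal.ofReal (k (s - t))
        * (B * D s + C * (ENNReal.ofReal (s - t) * ∫⁻ τ in Ioc t s, D τ))
      = B * (∫⁻ s in Ici t, ENNReal.ofReal (k (s - t)) * D s)
          + C * ∫⁻ τ in Ioi t, ENNReal.ofReal (J (τ - t)) * D τ := by
        simp_rw [mul_add, mul_left_comm (ENNReal.ofReal _) B, mul_left_comm (ENNReal.ofReal _) C]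
        rw [lintegral_add_left' (hkD.const_mul B), lintegral_const_mul'' B hkD,
          lintegral_const_mul' C _ hC, setLIntegral_ofReal_mul_sub_mul_setLIntegral_Ioc hkm hk₀
            hint (hD.mono_measure (Measure.restrict_mono Ioi_subset_Ici_self le_rfl))]
    _ ≤ B * Z + C * Z := by
        gcongr B * ?_ + C * ?_
        · refine setLIntegral_mono' measurableSet_Ici fun s (hs : t ≤ s) => ?_
          gcongr
          linarith [hJ₀ (s - t) (sub_nonneg.2 hs)]
        · refine (lintegral_mono_set Ioi_subset_Ici_self).trans
            (setLIntegral_mono' measurableSet_Ici fun s (hs : t ≤ s) => ?_)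
          gcongr
          linarith [hk₀ (s - t)]
    _ = (B + C) * Z := (add_mul B C Z).symm

section Kernel

variable {d : ℕ} {a : ℝ → Edge d → ℝ} {hk : ℝ → ℝ → Zd d → Zd d → ℝ}

lemma IsDynEnv.aemeasurable (ha : IsDynEnv d a) (e : Edge d) :
    AEMeasurable fun τ => a τ e :=
  (ha.2 e).aemeasurable

lemma IsDynKernel.mem_Icc (hker : IsDynKernel d a hk) {r t : ℝ} (hrt : r ≤ t) (x y : Zd d) :
    hk r t x y ∈ Icc (0:ℝ) 1 :=
  ⟨hker.nonneg r t x y hrt, le_hasSum (hker.mass r t x hrt) y fun z _ => hker.nonneg r t x z hrt⟩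

lemma IsDynKernel.aemeasurable (hker : IsDynKernel d a hk) (r : ℝ) (x y : Zd d) :
    AEMeasurable (fun τ => hk r τ x y) (volume.restrict (Ici r)) := by
  refine ((aemeasurable_const (b := if x = y then (1:ℝ) else 0)).add
    (aemeasurable_primitive (fun τ => gen (a τ) (hk r τ x) y) r)).congr ?_
  filter_upwards [ae_restrict_mem measurableSet_Ici] with τ hτ
  exact (hker.eqn r x y τ hτ).symm

lemma IsDynKernel.aemeasurable_gen (hker : IsDynKernel d a hk) (ha : IsDynEnv d a) (r : ℝ)
    (x y : Zd d) :
    AEMeasurable (fun τ => gen (a τ) (hk r τ x) y) (volume.restrict (Ici r)) := by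
  have hmeas : ∀ e z z', AEMeasurable (fun τ => a τ e * (hk r τ x z - hk r τ x z'))
      (volume.restrict (Ici r)) := fun e z z' =>
    (ha.aemeasurable e).restrict.mul ((hker.aemeasurable r x z).sub (hker.aemeasurable r x z'))
  exact Finset.aemeasurable_fun_sum _ fun i _ => (hmeas _ _ _).add (hmeas _ _ _)

lemma IsDynKernel.intervalIntegrable_gen (hker : IsDynKernel d a hk) (ha : IsDynEnv d a)
    {r t : ℝ} (hrt : r ≤ t) (x y : Zd d) :
    IntervalIntegrable (fun τ => gen (a τ) (hk r τ x) y) volume r t := by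
  rw [intervalIntegrable_iff_integrableOn_Ioc_of_le hrt]
  refine Integrable.mono' (integrable_const (2 * (d:ℝ))) ?_ ?_
  · exact ((hker.aemeasurable_gen ha r x y).mono_measure
      (Measure.restrict_mono (fun τ hτ => hτ.1.le) le_rfl)).aestronglyMeasurable
  · filter_upwards [ae_restrict_mem measurableSet_Ioc] with τ hτ
    exact abs_gen_le _ (ha.1 τ) _ (hker.mem_Icc hτ.1.le x) y

lemma IsDynKernel.sub_eq_integral (hker : IsDynKernel d a hk) (ha : IsDynEnv d a)
    {r t s : ℝ} (hrt : r ≤ t) (hts : t ≤ s) (x y : Zd d) :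
    hk r s x y - hk r t x y = ∫ τ in t..s, gen (a τ) (hk r τ x) y := by
  rw [hker.eqn r x y s (hrt.trans hts), hker.eqn r x y t hrt, add_sub_add_left_eq_sub,
    intervalIntegral.integral_interval_sub_left (hker.intervalIntegrable_gen ha (hrt.trans hts) x y)
      (hker.intervalIntegrable_gen ha hrt x y)]

lemma IsDynKernel.tsum_sq_sub_le (hker : IsDynKernel d a hk) (ha : IsDynEnv d a)
    {r t s : ℝ} (hrt : r ≤ t) (hts : t ≤ s) (x : Zd d) :
    ∑' y, ENNReal.ofReal ((hk r s x y - hk r t x y) ^ 2)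
      ≤ 4 * d * (ENNReal.ofReal (s - t) * ∫⁻ τ in Ioc t s, dirichlet (a τ) (hk r τ x)) := by
  have hsub : volume.restrict (Ioc t s) ≤ volume.restrict (Ici r) :=
    Measure.restrict_mono (fun τ hτ => hrt.trans hτ.1.le) le_rfl
  set F : Zd d → ℝ → ℝ := fun y τ => gen (a τ) (hk r τ x) y
  have hF : ∀ y, AEMeasurable (F y) (volume.restrict (Ioc t s)) := fun y =>
    (hker.aemeasurable_gen ha r x y).mono_measure hsub
  have hsite : ∀ y, ENNReal.ofReal ((hk r s x y - hk r t x y) ^ 2)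
      ≤ ENNReal.ofReal (s - t) * ∫⁻ τ in Ioc t s, ENNReal.ofReal (F y τ ^ 2) := fun y => by
    have hCS := sq_lintegral_le (hF y).enorm
    rw [Measure.restrict_apply_univ, Real.volume_Ioc] at hCS
    calc ENNReal.ofReal ((hk r s x y - hk r t x y) ^ 2)
        = ‖∫ τ in Ioc t s, F y τ‖ₑ ^ 2 := by
          rw [hker.sub_eq_integral ha hrt hts, intervalIntegral.integral_of_le hts,
            ← sq_abs, ENNReal.ofReal_pow (abs_nonneg _), Real.enorm_eq_ofReal_abs]
      _ ≤ (∫⁻ τ in Ioc t s, ‖F y τ‖ₑ) ^ 2 := by gcongr; exact enorm_integral_le_lintegral_enorm _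
      _ ≤ ENNReal.ofReal (s - t) * ∫⁻ τ in Ioc t s, ENNReal.ofReal (F y τ ^ 2) := by
          refine hCS.trans_eq ?_
          rw [mul_comm]
          congr 1
          refine lintegral_congr fun τ => ?_
          rw [Real.enorm_eq_ofReal_abs, ← ENNReal.ofReal_pow (abs_nonneg _), sq_abs]
  calc ∑' y, ENNReal.ofReal ((hk r s x y - hk r t x y) ^ 2)
      ≤ ENNReal.ofReal (s - t) * ∫⁻ τ in Ioc t s, ∑' y, ENNReal.ofReal (F y τ ^ 2) := by
        rw [lintegral_tsum fun y => (hF y).pow_const 2 |>.ennreal_ofReal, ← ENNReal.tsum_mul_left]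
        exact ENNReal.tsum_le_tsum hsite
    _ ≤ ENNReal.ofReal (s - t) * ∫⁻ τ in Ioc t s, 4 * d * dirichlet (a τ) (hk r τ x) := by
        gcongr with τ
        exact tsum_ofReal_sq_gen_le _ (ha.1 τ) _
    _ = 4 * d * (ENNReal.ofReal (s - t) * ∫⁻ τ in Ioc t s, dirichlet (a τ) (hk r τ x)) := by
        rw [lintegral_const_mul' _ _ (by finiteness)]
        ring

lemma IsDynKernel.aemeasurable_dirichlet (hker : IsDynKernel d a hk) (ha : IsDynEnv d a)
    (r : ℝ) (x : Zd d) :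
    AEMeasurable (fun τ => dirichlet (a τ) (hk r τ x)) (volume.restrict (Ici r)) := by
  simp only [dirichlet, grad2_eq]
  exact AEMeasurable.tsum fun e => (ha.aemeasurable e).restrict.ennreal_ofReal.mul
    (((hker.aemeasurable r x _).sub (hker.aemeasurable r x _)).pow_const 2).ennreal_ofReal

lemma IsDynKernel.dirichlet_le (hker : IsDynKernel d a hk) (ha : IsDynEnv d a)
    {r t s : ℝ} (hrt : r ≤ t) (hts : t ≤ s) (x : Zd d) :
    dirichlet (a s) (hk r t x) ≤ 2 * dirichlet (a s) (hk r s x)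
      + 32 * d ^ 2 * (ENNReal.ofReal (s - t) * ∫⁻ τ in Ioc t s, dirichlet (a τ) (hk r τ x)) :=
  calc dirichlet (a s) (hk r t x)
      ≤ 2 * dirichlet (a s) (hk r s x)
        + 8 * d * ∑' y, ENNReal.ofReal ((hk r s x y - hk r t x y) ^ 2) :=
        dirichlet_le_two_mul_dirichlet_add _ (fun e => (ha.1 s e).2) _ _
    _ ≤ 2 * dirichlet (a s) (hk r s x) + 8 * d
        * (4 * d * (ENNReal.ofReal (s - t) * ∫⁻ τ in Ioc t s, dirichlet (a τ) (hk r τ x))) := by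
        gcongr
        exact hker.tsum_sq_sub_le ha hrt hts x
    _ = _ := by ring

lemma tsum_lintegral_ofReal_mul_grad2 {μ : Measure ℝ} {φ : ℝ → ℝ} (hφ : Measurable φ)
    (hφ₀ : ∀ s, 0 ≤ φ s) (ha : ∀ e, AEMeasurable (fun s => a s e) μ) (u : Zd d → ℝ) :
    ∑' e, (∫⁻ s, ENNReal.ofReal (φ s * a s e) ∂μ) * grad2 u e
      = ∫⁻ s, ENNReal.ofReal (φ s) * dirichlet (a s) u ∂μ := by
  have hmeas : ∀ e, AEMeasurable (fun s => ENNReal.ofReal (φ s * a s e)) μ := fun e =>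
    (hφ.aemeasurable.mul (ha e)).ennreal_ofReal
  simp_rw [dirichlet, ← lintegral_mul_const'' _ (hmeas _)]
  rw [← lintegral_tsum fun e => (hmeas e).mul_const _]
  refine lintegral_congr fun s => ?_
  simp_rw [ENNReal.ofReal_mul (hφ₀ s), mul_assoc, ENNReal.tsum_mul_left]

end Kernel

/-- Here `w_t(e)² = ∫_t^∞ k_{s-t} a_s(e) ds` and `K_u = k_u + ∫_u^∞ s k_s ds` are written out. -/
theorem moderation_criterion_general
    (d : ℕ) :
    ∃ c : ℝ, 0 ≤ c ∧
      ∀ k : ℝ → ℝ, Measurable k → (∀ s, 0 ≤ k s) →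
        IntegrableOn (fun s => (1 + s ^ 2) * k s) (Ici (0:ℝ)) →
      ∀ a : ℝ → Edge d → ℝ, IsDynEnv d a →
      ∀ hk : ℝ → ℝ → Zd d → Zd d → ℝ, IsDynKernel d a hk →
      ∀ t : ℝ, 0 ≤ t →
        (∑' e : Edge d,
            (∫⁻ s in Ici t, ENNReal.ofReal (k (s - t) * a s e))
              * grad2 (fun z => hk 0 t 0 z) e)
          ≤ ENNReal.ofReal c *
              ∫⁻ s in Ici t,
                ENNReal.ofReal (k (s - t) + ∫ τ in Ici (s - t), τ * k τ)
                  * dynD d a hk s := by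
  refine ⟨2 + 32 * d ^ 2, by positivity, fun k hkm hk₀ hkint a ha hk hker t ht => ?_⟩
  set D : ℝ → ℝ≥0∞ := dynD d a hk
  have hD : AEMeasurable D (volume.restrict (Ici t)) :=
    (hker.aemeasurable_dirichlet ha 0 0).mono_measure
      (Measure.restrict_mono (Ici_subset_Ici.2 ht) le_rfl)
  have hmoment : IntegrableOn (fun σ => σ * k σ) (Ici 0) := by
    refine hkint.mono' (measurable_id.mul hkm).aestronglyMeasurable ?_
    filter_upwards [ae_restrict_mem measurableSet_Ici] with σ (hσ : 0 ≤ σ)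
    rw [Real.norm_of_nonneg (mul_nonneg hσ (hk₀ σ))]
    exact mul_le_mul_of_nonneg_right (by nlinarith) (hk₀ σ)
  have hc : ENNReal.ofReal (2 + 32 * d ^ 2) = 2 + 32 * d ^ 2 := by
    rw [ENNReal.ofReal_add zero_le_two (by positivity), ENNReal.ofReal_mul (by norm_num),
      ENNReal.ofReal_pow (Nat.cast_nonneg d), ENNReal.ofReal_natCast, ENNReal.ofReal_ofNat,
      ENNReal.ofReal_ofNat]
  calc ∑' e, (∫⁻ s in Ici t, ENNReal.ofReal (k (s - t) * a s e)) * grad2 (hk 0 t 0) e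
      = ∫⁻ s in Ici t, ENNReal.ofReal (k (s - t)) * dirichlet (a s) (hk 0 t 0) :=
        tsum_lintegral_ofReal_mul_grad2 (hkm.comp (measurable_sub_const t)) (fun s => hk₀ _)
          (fun e => (ha.aemeasurable e).restrict) _
    _ ≤ ∫⁻ s in Ici t, ENNReal.ofReal (k (s - t))
          * (2 * D s + 32 * d ^ 2 * (ENNReal.ofReal (s - t) * ∫⁻ τ in Ioc t s, D τ)) := by
        refine setLIntegral_mono' measurableSet_Ici fun s hs => ?_
        gcongr
        exact hker.dirichlet_le ha ht hs 0
    _ ≤ _ := by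
        rw [hc]
        exact setLIntegral_ofReal_mul_add_le_tail hkm hk₀ hmoment hD 2 (by finiteness)

/-- A criterion for moderation (Proposition 4.6). Here
`w_t(e)² = ∫_t^∞ k_{s-t} a_s(e) ds` and `K_u = k_u + ∫_u^∞ s k_s ds`. -/
theorem moderation_criterion
    (d : ℕ) (hd : 1 ≤ d) :
    ∃ c : ℝ, 0 ≤ c ∧
      ∀ k : ℝ → ℝ, Measurable k → (∀ s, 0 ≤ k s) →
        IntegrableOn (fun s => (1 + s ^ 2) * k s) (Ici (0:ℝ)) →
      ∀ a : ℝ → Edge d → ℝ, IsDynEnv d a →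
      ∀ hk : ℝ → ℝ → Zd d → Zd d → ℝ, IsDynKernel d a hk →
      ∀ t : ℝ, 0 ≤ t →
        (∑' e : Edge d,
            (∫⁻ s in Ici t, ENNReal.ofReal (k (s - t) * a s e))
              * grad2 (fun z => hk 0 t 0 z) e)
          ≤ ENNReal.ofReal c *
              ∫⁻ s in Ici t,
                ENNReal.ofReal (k (s - t) + ∫ τ in Ici (s - t), τ * k τ)
                  * dynD d a hk s :=
  moderation_criterion_general d

end AnchoredNash
end
end
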